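/- arXiv:math/0606047 — 5 statements merged into one kernel-verified Lean document; each statement's English description precedes it below -/
import Mathlib

section
/- Let A be a nonnegative N×N matrix with spectral radius λ and suppose A v ≥ λ v componentwise for some strictly positive vector v. Then for every index i belonging to a final class of A, one has (A v)_i = λ v_i. -/
open Matrix Filter Topology
open scoped ENNReal NNReal

noncomputable def sprad {n : Type*} [Fintype n] [DecidableEq n] (A : Matrix n n ℝ) : ℝ :=
  sSup ((fun z : ℂ => ‖z‖) '' spectrum ℂ (A.map (algebraMap ℝ ℂ)))

def Access {N : ℕ} (A : Matrix (Fin N) (Fin N) ℝ) (i j : Fin N) : Prop :=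
  ∃ n : ℕ, 0 < (A ^ n) i j

def IsClass {N : ℕ} (A : Matrix (Fin N) (Fin N) ℝ) (C : Finset (Fin N)) : Prop :=
  ∃ i : Fin N, ∀ j, j ∈ C ↔ (Access A i j ∧ Access A j i)

def IsFinalClass {N : ℕ} (A : Matrix (Fin N) (Fin N) ℝ) (C : Finset (Fin N)) : Prop :=
  IsClass A C ∧ ∀ i ∈ C, ∀ j, j ∉ C → ¬ Access A i j

noncomputable def restrict {N : ℕ} (A : Matrix (Fin N) (Fin N) ℝ) (C : Finset (Fin N)) :
    Matrix {x // x ∈ C} {x // x ∈ C} ℝ :=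
  A.submatrix Subtype.val Subtype.val

def IsBasicClass {N : ℕ} (A : Matrix (Fin N) (Fin N) ℝ) (C : Finset (Fin N)) : Prop :=
  IsClass A C ∧ sprad (restrict A C) = sprad A

def Irred {N : ℕ} (A : Matrix (Fin N) (Fin N) ℝ) : Prop :=
  ∀ i j, ∃ n : ℕ, 1 ≤ n ∧ 0 < (A ^ n) i j

def ProdProp {N : ℕ} (K : Finset (Matrix (Fin N) (Fin N) ℝ)) : Prop :=
  ∀ A ∈ K, ∀ B ∈ K, ∀ V : Finset (Fin N),
    (Matrix.of fun i j => if i ∈ V then A i j else B i j) ∈ K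

section SpectralLemma

attribute [local instance] Matrix.linftyOpNormedRing Matrix.linftyOpNormedAlgebra

variable {N : ℕ}

lemma pow_entry_nonneg (A : Matrix (Fin N) (Fin N) ℝ) (hA : ∀ i j, 0 ≤ A i j) :
    ∀ n, ∀ i j, 0 ≤ (A ^ n) i j := by
  intro n
  induction n with
  | zero =>
    intro i j
    rw [pow_zero]
    by_cases h : i = j <;> simp [Matrix.one_apply, h]
  | succ n ih =>
    intro i j
    rw [pow_succ, Matrix.mul_apply]
    exact Finset.sum_nonneg fun k _ => mul_nonneg (ih i k) (hA k j)

lemma sprad_eq_toReal {N : ℕ} [NeZero N] (A : Matrix (Fin N) (Fin N) ℝ) :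
    sprad A = (spectralRadius ℂ (A.map (algebraMap ℝ ℂ))).toReal := by
  set B := A.map (algebraMap ℝ ℂ) with hB
  obtain ⟨z₀, hz₀mem, hz₀⟩ := spectrum.exists_nnnorm_eq_spectralRadius B
  have hz₀' : ‖z₀‖ = (spectralRadius ℂ B).toReal := by
    rw [← hz₀]; simp
  rw [← hz₀']
  apply IsGreatest.csSup_eq
  constructor
  · exact ⟨z₀, hz₀mem, rfl⟩
  · rintro x ⟨z, hz, rfl⟩
    have : (‖z‖₊ : ℝ≥0∞) ≤ spectralRadius ℂ B := le_iSup₂ (f := fun k (_ : k ∈ spectrum ℂ B) => (‖k‖₊ : ℝ≥0∞)) z hz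
    rw [← hz₀] at this
    have := ENNReal.coe_le_coe.mp this
    calc ‖z‖ = ‖z‖ := rfl
    _ ≤ ‖z₀‖ := this
end SpectralLemma

lemma mulVec_le_mulVec {N : ℕ} (M : Matrix (Fin N) (Fin N) ℝ) (hM : ∀ i j, 0 ≤ M i j)
    {x y : Fin N → ℝ} (h : ∀ j, x j ≤ y j) (i : Fin N) : M.mulVec x i ≤ M.mulVec y i := by
  simp only [Matrix.mulVec, dotProduct]
  exact Finset.sum_le_sum fun j _ => mul_le_mul_of_nonneg_left (h j) (hM i j)

section Key
attribute [local instance] Matrix.linftyOpNormedRing Matrix.linftyOpNormedAlgebra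

lemma le_sprad_of_subeigen {N : ℕ} (A : Matrix (Fin N) (Fin N) ℝ) (hA : ∀ i j, 0 ≤ A i j)
    (u : Fin N → ℝ) (hu : ∀ i, 0 ≤ u i) (i₀ : Fin N) (hu0 : 0 < u i₀)
    (μ : ℝ) (hμ : 0 ≤ μ) (h : ∀ i, μ * u i ≤ A.mulVec u i) : μ ≤ sprad A := by
  haveI : NeZero N := ⟨by rintro rfl; exact i₀.elim0⟩
  set B := A.map (algebraMap ℝ ℂ) with hBdef
  -- iterate the inequality
  have hpow : ∀ n, ∀ i, μ ^ n * u i ≤ (A ^ n).mulVec u i := by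
    intro n
    induction n with
    | zero => intro i; simp [Matrix.one_mulVec]
    | succ n ih =>
      intro i
      calc μ ^ (n+1) * u i = μ * (μ ^ n * u i) := by ring
        _ ≤ μ * ((A ^ n).mulVec u i) := mul_le_mul_of_nonneg_left (ih i) hμ
        _ = (A ^ n).mulVec (μ • u) i := by rw [Matrix.mulVec_smul]; simp
        _ ≤ (A ^ n).mulVec (A.mulVec u) i := by
            refine mulVec_le_mulVec _ (pow_entry_nonneg A hA n) (fun j => ?_) i
            simpa using h j
        _ = (A ^ (n+1)).mulVec u i := by rw [pow_succ, ← Matrix.mulVec_mulVec]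
  -- bound via operator norm
  set K : ℝ := ∑ j, u j with hKdef
  have hK : 0 < K := by
    have : u i₀ ≤ K := Finset.single_le_sum (fun j _ => hu j) (Finset.mem_univ i₀)
    linarith
  have hBpow : ∀ n, B ^ n = (A ^ n).map (algebraMap ℝ ℂ) := by
    intro n
    simpa [hBdef] using (map_pow ((algebraMap ℝ ℂ).mapMatrix) A n).symm
  have hbound : ∀ n, μ ^ n * u i₀ ≤ ‖B ^ n‖ * K := by
    intro n
    have h1 : μ ^ n * u i₀ ≤ (A ^ n).mulVec u i₀ := hpow n i₀
    have h2 : (A ^ n).mulVec u i₀ ≤ (∑ j, (A ^ n) i₀ j) * K := by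
      rw [Matrix.mulVec, dotProduct, Finset.sum_mul]
      refine Finset.sum_le_sum fun j _ => ?_
      have : u j ≤ K := Finset.single_le_sum (fun l _ => hu l) (Finset.mem_univ j)
      exact mul_le_mul_of_nonneg_left this (pow_entry_nonneg A hA n i₀ j)
    have h3 : (∑ j, (A ^ n) i₀ j) ≤ ‖B ^ n‖ := by
      have hrow : (∑ j, (A ^ n) i₀ j) = ∑ j, ‖(B ^ n) i₀ j‖ := by
        refine Finset.sum_congr rfl fun j _ => ?_
        rw [hBpow n]
        simp only [Matrix.map_apply]
        rw [show ((algebraMap ℝ ℂ) ((A ^ n) i₀ j)) = (((A ^ n) i₀ j : ℝ) : ℂ) from rfl,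
          Complex.norm_real, Real.norm_eq_abs, abs_of_nonneg (pow_entry_nonneg A hA n i₀ j)]
      rw [hrow]
      have := Finset.le_sup (f := fun i => ∑ j, ‖(B ^ n) i j‖₊) (Finset.mem_univ i₀)
      have hc : ((∑ j, ‖(B ^ n) i₀ j‖₊ : ℝ≥0) : ℝ) ≤ ((Finset.univ.sup fun i => ∑ j, ‖(B ^ n) i j‖₊ : ℝ≥0) : ℝ) := by
        exact_mod_cast this
      rw [Matrix.linfty_opNorm_def]
      simpa using hc
    calc μ ^ n * u i₀ ≤ (∑ j, (A ^ n) i₀ j) * K := le_trans h1 h2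
      _ ≤ ‖B ^ n‖ * K := mul_le_mul_of_nonneg_right h3 hK.le
  -- spectral radius is finite
  obtain ⟨z₀, _, hz₀⟩ := spectrum.exists_nnnorm_eq_spectralRadius B
  have hfin : spectralRadius ℂ B ≠ ⊤ := by rw [← hz₀]; exact ENNReal.coe_ne_top
  -- Gelfand limit
  have hg := spectrum.pow_norm_pow_one_div_tendsto_nhds_spectralRadius B
  have ha : Tendsto (fun n : ℕ => ‖B ^ n‖ ^ (1 / (n : ℝ))) atTop
      (𝓝 ((spectralRadius ℂ B).toReal)) := by
    have := (ENNReal.tendsto_toReal hfin).comp hg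
    convert this using 2 with n
    rw [Function.comp_apply, ENNReal.toReal_ofReal (Real.rpow_nonneg (norm_nonneg _) _)]
  set q : ℝ := u i₀ / K with hqdef
  have hq : 0 < q := div_pos hu0 hK
  have hb : Tendsto (fun n : ℕ => μ * q ^ (1 / (n : ℝ))) atTop (𝓝 (μ * 1)) := by
    have h1 : Tendsto (fun n : ℕ => q ^ (1 / (n : ℝ))) atTop (𝓝 (q ^ (0:ℝ))) :=
      (Real.continuousAt_const_rpow hq.ne').tendsto.comp tendsto_one_div_atTop_nhds_zero_nat
    rw [Real.rpow_zero] at h1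
    exact h1.const_mul μ
  have hev : ∀ᶠ n : ℕ in atTop, μ * q ^ (1 / (n : ℝ)) ≤ ‖B ^ n‖ ^ (1 / (n : ℝ)) := by
    filter_upwards [eventually_ge_atTop 1] with n hn
    have hne : (n : ℝ) ≠ 0 := Nat.cast_ne_zero.mpr (by omega)
    have h1 : μ ^ n * q ≤ ‖B ^ n‖ := by
      rw [hqdef, ← mul_div_assoc, div_le_iff₀ hK]
      exact hbound n
    have h2 : (μ ^ n * q) ^ (1 / (n : ℝ)) ≤ ‖B ^ n‖ ^ (1 / (n : ℝ)) :=
      Real.rpow_le_rpow (mul_nonneg (pow_nonneg hμ n) hq.le) h1 (by positivity)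
    calc μ * q ^ (1 / (n : ℝ)) = (μ ^ n) ^ (1 / (n : ℝ)) * q ^ (1 / (n : ℝ)) := by
          rw [← Real.rpow_natCast μ n, ← Real.rpow_mul hμ, mul_one_div_cancel hne, Real.rpow_one]
      _ = (μ ^ n * q) ^ (1 / (n : ℝ)) := (Real.mul_rpow (pow_nonneg hμ n) hq.le).symm
      _ ≤ ‖B ^ n‖ ^ (1 / (n : ℝ)) := h2
  have := le_of_tendsto_of_tendsto hb ha hev
  rw [mul_one] at this
  rwa [sprad_eq_toReal]
end Key

lemma access_trans {N : ℕ} {A : Matrix (Fin N) (Fin N) ℝ} (hA : ∀ i j, 0 ≤ A i j)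
    {i j k : Fin N} (h1 : Access A i j) (h2 : Access A j k) : Access A i k := by
  obtain ⟨m, hm⟩ := h1
  obtain ⟨n, hn⟩ := h2
  refine ⟨m + n, ?_⟩
  rw [pow_add, Matrix.mul_apply]
  have hterm : 0 < (A ^ m) i j * (A ^ n) j k := mul_pos hm hn
  refine lt_of_lt_of_le hterm ?_
  exact Finset.single_le_sum
    (fun l _ => mul_nonneg (pow_entry_nonneg A hA m i l) (pow_entry_nonneg A hA n l k))
    (Finset.mem_univ j)

lemma pow_le_onePlusPow {N : ℕ} (A : Matrix (Fin N) (Fin N) ℝ) (hA : ∀ i j, 0 ≤ A i j) :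
    ∀ n k, k ≤ n → ∀ i j, (A ^ k) i j ≤ ((1 + A) ^ n) i j := by
  have h1A : ∀ i j, 0 ≤ (1 + A) i j := by
    intro i j
    have : (1 + A) i j = (1 : Matrix (Fin N) (Fin N) ℝ) i j + A i j := rfl
    rw [this]
    have h1 : (0:ℝ) ≤ (1 : Matrix (Fin N) (Fin N) ℝ) i j := by
      by_cases h : i = j <;> simp [Matrix.one_apply, h]
    linarith [hA i j]
  intro n
  induction n with
  | zero =>
    intro k hk i j
    interval_cases k
    simp
  | succ n ih =>
    intro k hk i j
    have hsplit : ((1 + A) ^ (n+1)) i j = ((1 + A) ^ n) i j + ((1 + A) ^ n * A) i j := by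
      rw [pow_succ, mul_add, mul_one]
      rfl
    have hterm2 : 0 ≤ ((1 + A) ^ n * A) i j := by
      rw [Matrix.mul_apply]
      exact Finset.sum_nonneg fun l _ =>
        mul_nonneg (pow_entry_nonneg (1 + A) h1A n i l) (hA l j)
    rcases Nat.lt_or_ge k (n+1) with hlt | hge
    · have := ih k (by omega) i j
      rw [hsplit]
      linarith
    · have hk' : k = n + 1 := by omega
      subst hk'
      rw [hsplit]
      have : (A ^ (n+1)) i j ≤ ((1 + A) ^ n * A) i j := by
        rw [pow_succ, Matrix.mul_apply, Matrix.mul_apply]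
        exact Finset.sum_le_sum fun l _ =>
          mul_le_mul_of_nonneg_right (ih n le_rfl i l) (hA l j)
      have := pow_entry_nonneg (1 + A) h1A n i j
      linarith

theorem stmt4 {N : ℕ} (A : Matrix (Fin N) (Fin N) ℝ) (hA : ∀ i j, 0 ≤ A i j)
    (v : Fin N → ℝ) (hv : ∀ i, 0 < v i)
    (hineq : ∀ i, sprad A * v i ≤ A.mulVec v i)
    (C : Finset (Fin N)) (hC : IsFinalClass A C) :
    ∀ i ∈ C, A.mulVec v i = sprad A * v i := by
  intro i₀ hi₀
  haveI : NeZero N := ⟨by rintro rfl; exact i₀.elim0⟩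
  set lam := sprad A with hlam
  have hlam0 : 0 ≤ lam := by
    rw [hlam, sprad_eq_toReal]; exact ENNReal.toReal_nonneg
  by_contra hne
  have hstrict : lam * v i₀ < A.mulVec v i₀ := lt_of_le_of_ne (hineq i₀) (Ne.symm hne)
  -- entries from C to outside C vanish
  have hzero : ∀ i ∈ C, ∀ j, j ∉ C → A i j = 0 := by
    intro i hi j hj
    by_contra hne'
    have hpos : 0 < A i j := lt_of_le_of_ne (hA i j) (Ne.symm hne')
    exact hC.2 i hi j hj ⟨1, by rwa [pow_one]⟩
  -- truncation doesn't change mulVec on C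
  have htrunc : ∀ (x : Fin N → ℝ), ∀ i ∈ C,
      A.mulVec (fun j => if j ∈ C then x j else 0) i = A.mulVec x i := by
    intro x i hi
    simp only [Matrix.mulVec, dotProduct]
    refine Finset.sum_congr rfl fun j _ => ?_
    by_cases hj : j ∈ C
    · simp [hj]
    · simp [hj, hzero i hi j hj]
  set u : Fin N → ℝ := fun j => if j ∈ C then v j else 0 with hudef
  have hu_nonneg : ∀ j, 0 ≤ u j := by
    intro j; rw [hudef]; by_cases hj : j ∈ C <;> simp [hj, (hv j).le]
  set y : Fin N → ℝ := fun j => A.mulVec u j - lam * u j with hydef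
  have hy_nonneg : ∀ j, 0 ≤ y j := by
    intro j
    rw [hydef]
    by_cases hj : j ∈ C
    · have h1 : A.mulVec u j = A.mulVec v j := htrunc v j hj
      have h2 : u j = v j := by simp [hudef, hj]
      simp only [h1, h2]
      linarith [hineq j]
    · have h2 : u j = 0 := by simp [hudef, hj]
      have h1 : 0 ≤ A.mulVec u j := by
        simp only [Matrix.mulVec, dotProduct]
        exact Finset.sum_nonneg fun l _ => mul_nonneg (hA j l) (hu_nonneg l)
      simp only [h2]
      linarith
  have hy0 : 0 < y i₀ := by
    rw [hydef]
    have h1 : A.mulVec u i₀ = A.mulVec v i₀ := htrunc v i₀ hi₀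
    have h2 : u i₀ = v i₀ := by simp [hudef, hi₀]
    simp only [h1, h2]
    linarith
  -- access to i₀ from everyone in C
  have haccess : ∀ k ∈ C, Access A k i₀ := by
    intro k hk
    obtain ⟨s, hs⟩ := hC.1
    exact access_trans hA ((hs k).mp hk).2 ((hs i₀).mp hi₀).1
  classical
  set nwit : Fin N → ℕ := fun k => if h : Access A k i₀ then h.choose else 0 with hnwit
  have hnwit_spec : ∀ k ∈ C, 0 < (A ^ (nwit k)) k i₀ := by
    intro k hk
    have h := haccess k hk
    simp only [hnwit, dif_pos h]
    exact h.choose_spec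
  set M : ℕ := Finset.univ.sup nwit with hM
  set P : Matrix (Fin N) (Fin N) ℝ := (1 + A) ^ M with hP
  have h1A : ∀ i j, 0 ≤ (1 + A) i j := by
    intro i j
    have : (1 + A) i j = (1 : Matrix (Fin N) (Fin N) ℝ) i j + A i j := rfl
    rw [this]
    have h1 : (0:ℝ) ≤ (1 : Matrix (Fin N) (Fin N) ℝ) i j := by
      by_cases h : i = j <;> simp [Matrix.one_apply, h]
    linarith [hA i j]
  have hPnn : ∀ i j, 0 ≤ P i j := pow_entry_nonneg (1 + A) h1A M
  have hPpos : ∀ k ∈ C, 0 < P k i₀ := by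
    intro k hk
    exact lt_of_lt_of_le (hnwit_spec k hk)
      (pow_le_onePlusPow A hA M (nwit k) (Finset.le_sup (Finset.mem_univ k)) k i₀)
  have hPge1 : ∀ i j, (1 : Matrix (Fin N) (Fin N) ℝ) i j ≤ P i j := by
    intro i j
    have := pow_le_onePlusPow A hA M 0 (Nat.zero_le M) i j
    rwa [pow_zero] at this
  set u' : Fin N → ℝ := P.mulVec u with hu'
  have hu'_nonneg : ∀ j, 0 ≤ u' j := by
    intro j
    simp only [hu', Matrix.mulVec, dotProduct]
    exact Finset.sum_nonneg fun l _ => mul_nonneg (hPnn j l) (hu_nonneg l)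
  have hu'_pos : ∀ k ∈ C, 0 < u' k := by
    intro k hk
    have h1 : (1 : Matrix (Fin N) (Fin N) ℝ).mulVec u k ≤ u' k := by
      simp only [hu', Matrix.mulVec, dotProduct]
      exact Finset.sum_le_sum fun l _ => mul_le_mul_of_nonneg_right (hPge1 k l) (hu_nonneg l)
    rw [Matrix.one_mulVec] at h1
    have h2 : u k = v k := by simp [hudef, hk]
    rw [h2] at h1
    linarith [hv k]
  -- key identity
  have hcomm : A * P = P * A := by
    have : Commute A ((1 + A) ^ M) :=
      ((Commute.one_right A).add_right (Commute.refl A)).pow_right M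
    exact this
  have hkey : ∀ k, A.mulVec u' k = lam * u' k + P.mulVec y k := by
    intro k
    have h1 : A.mulVec u' = P.mulVec (A.mulVec u) := by
      rw [hu', Matrix.mulVec_mulVec, hcomm, ← Matrix.mulVec_mulVec]
    have h2 : A.mulVec u = fun j => lam * u j + y j := by
      funext j; rw [hydef]; ring
    have h3 : P.mulVec (fun j => lam * u j + y j) k = lam * P.mulVec u k + P.mulVec y k := by
      simp only [Matrix.mulVec, dotProduct, Finset.mul_sum, ← Finset.sum_add_distrib]
      refine Finset.sum_congr rfl fun l _ => ?_
      ring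
    rw [h1, h2, h3, hu']
  have hPy_nonneg : ∀ k, 0 ≤ P.mulVec y k := by
    intro k
    simp only [Matrix.mulVec, dotProduct]
    exact Finset.sum_nonneg fun l _ => mul_nonneg (hPnn k l) (hy_nonneg l)
  have hPy_pos : ∀ k ∈ C, 0 < P.mulVec y k := by
    intro k hk
    have h1 : 0 < P k i₀ * y i₀ := mul_pos (hPpos k hk) hy0
    refine lt_of_lt_of_le h1 ?_
    simp only [Matrix.mulVec, dotProduct]
    exact Finset.single_le_sum (fun l _ => mul_nonneg (hPnn k l) (hy_nonneg l))
      (Finset.mem_univ i₀)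
  have hCne : C.Nonempty := ⟨i₀, hi₀⟩
  set ε : ℝ := C.inf' hCne (fun k => P.mulVec y k / u' k) with hε
  have hεpos : 0 < ε := by
    rw [hε, Finset.lt_inf'_iff]
    intro k hk
    exact div_pos (hPy_pos k hk) (hu'_pos k hk)
  set u'' : Fin N → ℝ := fun j => if j ∈ C then u' j else 0 with hu''
  have hu''_nonneg : ∀ j, 0 ≤ u'' j := by
    intro j; rw [hu'']; by_cases hj : j ∈ C <;> simp [hj, hu'_nonneg j]
  have hu''_pos : 0 < u'' i₀ := by
    rw [hu'']; simp only [hi₀, if_pos]; exact hu'_pos i₀ hi₀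
  have hsub : ∀ k, (lam + ε) * u'' k ≤ A.mulVec u'' k := by
    intro k
    by_cases hk : k ∈ C
    · have h1 : A.mulVec u'' k = A.mulVec u' k := htrunc u' k hk
      have h2 : u'' k = u' k := by simp [hu'', hk]
      rw [h1, h2, hkey k]
      have h3 : ε ≤ P.mulVec y k / u' k := Finset.inf'_le _ hk
      have h4 : ε * u' k ≤ P.mulVec y k := (le_div_iff₀ (hu'_pos k hk)).mp h3
      nlinarith [hu'_pos k hk]
    · have h2 : u'' k = 0 := by simp [hu'', hk]
      have h1 : 0 ≤ A.mulVec u'' k := by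
        simp only [Matrix.mulVec, dotProduct]
        exact Finset.sum_nonneg fun l _ => mul_nonneg (hA k l) (hu''_nonneg l)
      rw [h2]
      linarith
  have hfinal := le_sprad_of_subeigen A hA u'' hu''_nonneg i₀ hu''_pos (lam + ε)
    (by linarith) hsub
  rw [← hlam] at hfinal
  linarith
end

section
/- Let A be a nonnegative N×N matrix with spectral radius λ > 0 possessing a strictly positive eigenvector. Then the Cesàro limit A* = lim_{n→∞} (1/(n+1)) ∑_{i=0}^{n} λ^{-i} A^i exists, is a nonnegative matrix, and satisfies A A* = A* A = λ A* and (A*)² = A*. -/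
open Matrix Filter Topology

theorem cesaro_main {N : ℕ} (B : Matrix (Fin N) (Fin N) ℝ) (hB : ∀ i j, 0 ≤ B i j)
    (w : Fin N → ℝ) (hw : ∀ i, 0 < w i) (hBw : B *ᵥ w = w) :
    ∃ P : Matrix (Fin N) (Fin N) ℝ,
      Tendsto (fun n : ℕ => (1 / ((n : ℝ) + 1)) • ∑ k ∈ Finset.range (n + 1), B ^ k)
        atTop (𝓝 P) ∧
      (∀ i j, 0 ≤ P i j) ∧ B * P = P ∧ P * B = P ∧ P * P = P := by
  have hpow_nonneg : ∀ n : ℕ, ∀ i j, 0 ≤ (B ^ n) i j := by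
    intro n
    induction n with
    | zero => intro i j; by_cases h : i = j <;> simp [Matrix.one_apply, h]
    | succ n ih =>
      intro i j
      rw [pow_succ, Matrix.mul_apply]
      exact Finset.sum_nonneg fun k _ => mul_nonneg (ih i k) (hB k j)
  have hpow_w : ∀ n : ℕ, (B ^ n) *ᵥ w = w := by
    intro n
    induction n with
    | zero => simp
    | succ n ih => rw [pow_succ, ← Matrix.mulVec_mulVec, hBw, ih]
  have hbound : ∀ (n : ℕ) (i j : Fin N), (B ^ n) i j ≤ w i / w j := by
    intro n i j
    have h1 : ∑ k, (B ^ n) i k * w k = w i := by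
      have := congrFun (hpow_w n) i
      simpa [Matrix.mulVec, dotProduct] using this
    have h2 : (B ^ n) i j * w j ≤ ∑ k, (B ^ n) i k * w k :=
      Finset.single_le_sum (f := fun k => (B ^ n) i k * w k)
        (fun k _ => mul_nonneg (hpow_nonneg n i k) (hw k).le) (Finset.mem_univ j)
    rw [h1] at h2
    exact (le_div_iff₀ (hw j)).2 h2
  have hmb : ∀ (y : Fin N → ℝ) (i : Fin N), ∃ M : ℝ, ∀ n : ℕ, |((B ^ n) *ᵥ y) i| ≤ M := by
    intro y i
    refine ⟨∑ j, (w i / w j) * |y j|, fun n => ?_⟩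
    have h0 : ((B ^ n) *ᵥ y) i = ∑ j, (B ^ n) i j * y j := by
      simp [Matrix.mulVec, dotProduct]
    rw [h0]
    calc |∑ j, (B ^ n) i j * y j| ≤ ∑ j, |(B ^ n) i j * y j| :=
          Finset.abs_sum_le_sum_abs _ _
      _ ≤ ∑ j, (w i / w j) * |y j| := Finset.sum_le_sum fun j _ => by
          rw [abs_mul, abs_of_nonneg (hpow_nonneg n i j)]
          exact mul_le_mul_of_nonneg_right (hbound n i j) (abs_nonneg _)
  -- decomposition
  have key : ∀ v : Fin N → ℝ, ∃ u z : Fin N → ℝ, B *ᵥ u = u ∧ v = u + (B *ᵥ z - z) := by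
    set g : (Fin N → ℝ) →ₗ[ℝ] (Fin N → ℝ) := B.mulVecLin - LinearMap.id with hg
    have hgapp : ∀ x, g x = B *ᵥ x - x := by
      intro x; simp [hg, Matrix.mulVecLin_apply]
    have hdisj : Disjoint (LinearMap.ker g) (LinearMap.range g) := by
      rw [disjoint_iff_inf_le]
      intro x hx
      obtain ⟨hxk, y, hy⟩ := Submodule.mem_inf.1 hx
      have hxfix : B *ᵥ x = x := by
        have := LinearMap.mem_ker.1 hxk
        rw [hgapp] at this
        linear_combination (norm := module) this
      have hxfixn : ∀ n : ℕ, (B ^ n) *ᵥ x = x := by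
        intro n
        induction n with
        | zero => simp
        | succ n ih => rw [pow_succ', ← Matrix.mulVec_mulVec, ih, hxfix]
      rw [hgapp] at hy
      have htel : ∀ n : ℕ, ((n : ℝ) + 1) • x = (B ^ (n + 1)) *ᵥ y - y := by
        intro n
        induction n with
        | zero => simpa using hy.symm
        | succ n ih =>
          have hstep : (B ^ (n + 2)) *ᵥ y - (B ^ (n + 1)) *ᵥ y = x := by
            have : (B ^ (n + 1)) *ᵥ (B *ᵥ y - y) = x := by
              rw [hy, hxfixn]
            rw [Matrix.mulVec_sub, Matrix.mulVec_mulVec, ← pow_succ] at this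
            exact this
          have : ((n : ℝ) + 1 + 1) • x = (B ^ (n + 2)) *ᵥ y - y := by
            rw [add_smul, one_smul, ih, ← hstep]
            abel
          simpa [add_assoc] using this
      have hx0 : x = 0 := by
        funext i
        by_contra hne
        obtain ⟨M, hM⟩ := hmb y i
        obtain ⟨n, hn⟩ := exists_nat_gt ((M + |y i|) / |x i|)
        have hxi : |x i| ≠ 0 := fun h => hne (abs_eq_zero.1 h)
        have hpos : (0:ℝ) < |x i| := lt_of_le_of_ne (abs_nonneg _) (Ne.symm hxi)
        have h1 : ((n : ℝ) + 1) * |x i| = |((B ^ (n + 1)) *ᵥ y) i - y i| := by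
          have := congrFun (htel n) i
          have h2 : ((n:ℝ) + 1) * x i = ((B ^ (n + 1)) *ᵥ y) i - y i := by
            simpa [Pi.smul_apply, smul_eq_mul] using this
          rw [← h2, abs_mul, abs_of_nonneg (by positivity : (0:ℝ) ≤ (n:ℝ)+1)]
        have h3 : |((B ^ (n + 1)) *ᵥ y) i - y i| ≤ M + |y i| :=
          (abs_sub _ _).trans (add_le_add (hM (n+1)) le_rfl)
        have h4 : ((n : ℝ) + 1) * |x i| ≤ M + |y i| := h1.le.trans h3
        have h5 : (M + |y i|) / |x i| < (n : ℝ) + 1 := hn.trans (by linarith)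
        rw [div_lt_iff₀ hpos] at h5
        linarith
      simp [Submodule.mem_bot, hx0]
    have hdim : Module.finrank ℝ (LinearMap.ker g) + Module.finrank ℝ (LinearMap.range g) =
        Module.finrank ℝ (Fin N → ℝ) := by
      rw [add_comm]; exact LinearMap.finrank_range_add_finrank_ker g
    have hsup := Submodule.eq_top_of_disjoint _ _ hdim.ge hdisj
    intro v
    have hv : v ∈ LinearMap.ker g ⊔ LinearMap.range g := by rw [hsup]; trivial
    obtain ⟨u, hu, zz, hz, huz⟩ := Submodule.mem_sup.1 hv
    obtain ⟨z, hz'⟩ := hz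
    refine ⟨u, z, ?_, ?_⟩
    · have := LinearMap.mem_ker.1 hu
      rw [hgapp] at this
      linear_combination (norm := module) this
    · rw [← huz, ← hz', hgapp]
  choose u y hu hdecomp using fun j => key (Pi.single j 1)
  set P : Matrix (Fin N) (Fin N) ℝ := Matrix.of fun i j => u j i with hP
  have hsum : ∀ (j : Fin N) (n : ℕ),
      ∑ k ∈ Finset.range (n + 1), (B ^ k) *ᵥ (Pi.single j 1) =
        ((n : ℝ) + 1) • u j + ((B ^ (n + 1)) *ᵥ y j - y j) := by
    intro j n
    induction n with
    | zero =>
      simp only [Finset.sum_range_one, pow_zero, Matrix.one_mulVec, Nat.cast_zero, zero_add,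
        one_smul, pow_one]
      exact hdecomp j
    | succ n ih =>
      rw [Finset.sum_range_succ, ih]
      have hfix : ∀ m : ℕ, (B ^ m) *ᵥ u j = u j := by
        intro m
        induction m with
        | zero => simp
        | succ m ihm => rw [pow_succ', ← Matrix.mulVec_mulVec, ihm, hu]
      have h1 : (B ^ (n + 1)) *ᵥ (Pi.single j 1) =
          u j + ((B ^ (n + 2)) *ᵥ y j - (B ^ (n + 1)) *ᵥ y j) := by
        rw [hdecomp j, Matrix.mulVec_add, Matrix.mulVec_sub, hfix,
          Matrix.mulVec_mulVec, ← pow_succ]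
      rw [h1]
      push_cast
      match_scalars <;> ring
  have hentry : ∀ i j : Fin N,
      Tendsto (fun n : ℕ => ((1 / ((n : ℝ) + 1)) • ∑ k ∈ Finset.range (n + 1), B ^ k) i j)
        atTop (𝓝 (P i j)) := by
    intro i j
    have heq : ∀ n : ℕ,
        ((1 / ((n : ℝ) + 1)) • ∑ k ∈ Finset.range (n + 1), B ^ k) i j =
          u j i + (1 / ((n : ℝ) + 1)) * (((B ^ (n + 1)) *ᵥ y j) i - y j i) := by
      intro n
      have h1 : ∑ k ∈ Finset.range (n + 1), (B ^ k) i j =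
          ((n : ℝ) + 1) * u j i + (((B ^ (n + 1)) *ᵥ y j) i - y j i) := by
        have := congrFun (hsum j n) i
        simpa [Finset.sum_apply, Pi.smul_apply, smul_eq_mul] using this
      have hne : ((n : ℝ) + 1) ≠ 0 := by positivity
      rw [Matrix.smul_apply, Matrix.sum_apply, smul_eq_mul]
      rw [h1]
      field_simp
    rw [show P i j = u j i from rfl]
    have h2 : Tendsto (fun n : ℕ =>
        u j i + (1 / ((n : ℝ) + 1)) * (((B ^ (n + 1)) *ᵥ y j) i - y j i)) atTop
        (𝓝 (u j i + 0)) := by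
      refine tendsto_const_nhds.add ?_
      obtain ⟨M, hM⟩ := hmb (y j) i
      apply squeeze_zero_norm (a := fun n : ℕ => (M + |y j i|) * (1 / ((n : ℝ) + 1)))
      · intro n
        rw [Real.norm_eq_abs, abs_mul]
        have hMn : (0:ℝ) ≤ M := (abs_nonneg _).trans (hM 0)
        have hb : |((B ^ (n + 1)) *ᵥ y j) i - y j i| ≤ M + |y j i| :=
          (abs_sub _ _).trans (add_le_add (hM (n+1)) le_rfl)
        have h1 : |1 / ((n : ℝ) + 1)| = 1 / ((n : ℝ) + 1) := abs_of_pos (by positivity)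
        rw [h1, mul_comm]
        exact mul_le_mul_of_nonneg_right hb (by positivity)
      · have := tendsto_one_div_add_atTop_nhds_zero_nat (𝕜 := ℝ)
        simpa using this.const_mul (M + |y j i|)
    rw [add_zero] at h2
    exact h2.congr fun n => (heq n).symm
  have hconv : Tendsto (fun n : ℕ => (1 / ((n : ℝ) + 1)) • ∑ k ∈ Finset.range (n + 1), B ^ k)
      atTop (𝓝 P) := by
    refine tendsto_pi_nhds.2 fun i => tendsto_pi_nhds.2 fun j => hentry i j
  have hPn : ∀ i j, 0 ≤ P i j := by
    intro i j
    refine ge_of_tendsto' (hentry i j) fun n => ?_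
    rw [Matrix.smul_apply, Matrix.sum_apply, smul_eq_mul]
    exact mul_nonneg (by positivity) (Finset.sum_nonneg fun k _ => hpow_nonneg k i j)
  have hBP : B * P = P := by
    ext i j
    have h1 : (B *ᵥ u j) i = u j i := congrFun (hu j) i
    simpa [Matrix.mul_apply, Matrix.mulVec, dotProduct, hP] using h1
  have hPB : P * B = P := by
    have h1 : Tendsto (fun n : ℕ =>
        ((1 / ((n : ℝ) + 1)) • ∑ k ∈ Finset.range (n + 1), B ^ k) * B) atTop (𝓝 (P * B)) := by
      refine tendsto_pi_nhds.2 fun i => tendsto_pi_nhds.2 fun j => ?_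
      have : ∀ n : ℕ, (((1 / ((n : ℝ) + 1)) • ∑ k ∈ Finset.range (n + 1), B ^ k) * B) i j =
          ∑ k, ((1 / ((n : ℝ) + 1)) • ∑ m ∈ Finset.range (n + 1), B ^ m) i k * B k j := by
        intro n; rw [Matrix.mul_apply]
      refine Tendsto.congr (fun n => (this n).symm) ?_
      have hlim : Tendsto (fun n : ℕ =>
          ∑ k, ((1 / ((n : ℝ) + 1)) • ∑ m ∈ Finset.range (n + 1), B ^ m) i k * B k j)
          atTop (𝓝 (∑ k, P i k * B k j)) :=
        tendsto_finset_sum _ fun k _ => (hentry i k).mul_const (B k j)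
      rw [show (P * B) i j = ∑ k, P i k * B k j from Matrix.mul_apply]
      exact hlim
    have h2 : Tendsto (fun n : ℕ =>
        ((1 / ((n : ℝ) + 1)) • ∑ k ∈ Finset.range (n + 1), B ^ k) * B) atTop (𝓝 P) := by
      have hSB : ∀ n : ℕ, (∑ k ∈ Finset.range (n + 1), B ^ k) * B =
          ∑ k ∈ Finset.range (n + 1), B ^ k + (B ^ (n + 1) - 1) := by
        intro n
        rw [Finset.sum_mul]
        have e1 : ∀ k : ℕ, B ^ k * B = B ^ (k + 1) := fun k => (pow_succ B k).symm
        simp_rw [e1]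
        have e2 : ∑ k ∈ Finset.range (n + 2), B ^ k =
            (∑ k ∈ Finset.range (n + 1), B ^ (k + 1)) + B ^ 0 := Finset.sum_range_succ' _ _
        have e3 : ∑ k ∈ Finset.range (n + 2), B ^ k =
            ∑ k ∈ Finset.range (n + 1), B ^ k + B ^ (n + 1) := Finset.sum_range_succ _ _
        have := e2.symm.trans e3
        rw [pow_zero] at this
        linear_combination (norm := abel) this
      refine tendsto_pi_nhds.2 fun i => tendsto_pi_nhds.2 fun j => ?_
      have heq2 : ∀ n : ℕ,
          (((1 / ((n : ℝ) + 1)) • ∑ k ∈ Finset.range (n + 1), B ^ k) * B) i j =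
          ((1 / ((n : ℝ) + 1)) • ∑ k ∈ Finset.range (n + 1), B ^ k) i j +
            (1 / ((n : ℝ) + 1)) * ((B ^ (n + 1)) i j - (1 : Matrix (Fin N) (Fin N) ℝ) i j) := by
        intro n
        rw [Matrix.smul_mul, hSB n]
        simp only [Matrix.smul_apply, Matrix.add_apply, Matrix.sub_apply, smul_eq_mul]
        ring
      have h3 : Tendsto (fun n : ℕ =>
          (1 / ((n : ℝ) + 1)) * ((B ^ (n + 1)) i j - (1 : Matrix (Fin N) (Fin N) ℝ) i j))
          atTop (𝓝 0) := by
        apply squeeze_zero_norm (a := fun n : ℕ => (w i / w j + 1) * (1 / ((n : ℝ) + 1)))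
        · intro n
          rw [Real.norm_eq_abs, abs_mul]
          have hb : |(B ^ (n + 1)) i j - (1 : Matrix (Fin N) (Fin N) ℝ) i j| ≤ w i / w j + 1 := by
            refine (abs_sub _ _).trans (add_le_add ?_ ?_)
            · rw [abs_of_nonneg (hpow_nonneg (n+1) i j)]; exact hbound (n+1) i j
            · by_cases h : i = j <;> simp [Matrix.one_apply, h]
          have h1 : |1 / ((n : ℝ) + 1)| = 1 / ((n : ℝ) + 1) := abs_of_pos (by positivity)
          rw [h1, mul_comm]
          exact mul_le_mul_of_nonneg_right hb (by positivity)
        · have := tendsto_one_div_add_atTop_nhds_zero_nat (𝕜 := ℝ)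
          simpa using this.const_mul (w i / w j + 1)
      have h4 := (hentry i j).add h3
      rw [add_zero] at h4
      exact h4.congr fun n => (heq2 n).symm
    exact tendsto_nhds_unique h1 h2
  have hPpow : ∀ k : ℕ, P * B ^ k = P := by
    intro k
    induction k with
    | zero => simp
    | succ k ih => rw [pow_succ, ← mul_assoc, ih, hPB]
  have hPS : ∀ n : ℕ, P * ((1 / ((n : ℝ) + 1)) • ∑ k ∈ Finset.range (n + 1), B ^ k) = P := by
    intro n
    rw [Matrix.mul_smul, Finset.mul_sum]
    simp_rw [hPpow]
    rw [Finset.sum_const, Finset.card_range, ← Nat.cast_smul_eq_nsmul ℝ, smul_smul]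
    push_cast
    rw [one_div, inv_mul_cancel₀ (by positivity : ((n:ℝ)+1) ≠ 0), one_smul]
  have hPP : P * P = P := by
    have h1 : Tendsto (fun n : ℕ =>
        P * ((1 / ((n : ℝ) + 1)) • ∑ k ∈ Finset.range (n + 1), B ^ k)) atTop (𝓝 (P * P)) := by
      refine tendsto_pi_nhds.2 fun i => tendsto_pi_nhds.2 fun j => ?_
      have : ∀ n : ℕ, (P * ((1 / ((n : ℝ) + 1)) • ∑ k ∈ Finset.range (n + 1), B ^ k)) i j =
          ∑ k, P i k * ((1 / ((n : ℝ) + 1)) • ∑ m ∈ Finset.range (n + 1), B ^ m) k j := by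
        intro n; rw [Matrix.mul_apply]
      refine Tendsto.congr (fun n => (this n).symm) ?_
      rw [show (P * P) i j = ∑ k, P i k * P k j from Matrix.mul_apply]
      exact tendsto_finset_sum _ fun k _ => (hentry k j).const_mul (P i k)
    have h2 : Tendsto (fun n : ℕ =>
        P * ((1 / ((n : ℝ) + 1)) • ∑ k ∈ Finset.range (n + 1), B ^ k)) atTop (𝓝 P) := by
      simp_rw [hPS]
      exact tendsto_const_nhds
    exact tendsto_nhds_unique h1 h2
  exact ⟨P, hconv, hPn, hBP, hPB, hPP⟩


theorem stmt6 {N : ℕ} (A : Matrix (Fin N) (Fin N) ℝ) (hA : ∀ i j, 0 ≤ A i j)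
    (hspr : 0 < sprad A)
    (hpos : ∃ w : Fin N → ℝ, (∀ i, 0 < w i) ∧ A.mulVec w = sprad A • w) :
    ∃ Astar : Matrix (Fin N) (Fin N) ℝ,
      Tendsto (fun n : ℕ => (1 / ((n : ℝ) + 1)) •
          ∑ i ∈ Finset.range (n + 1), ((sprad A)⁻¹) ^ i • A ^ i) atTop (𝓝 Astar) ∧
      (∀ i j, 0 ≤ Astar i j) ∧
      A * Astar = sprad A • Astar ∧ Astar * A = sprad A • Astar ∧
      Astar * Astar = Astar := by
  obtain ⟨w, hw, hweig⟩ := hpos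
  have hl : sprad A ≠ 0 := ne_of_gt hspr
  set B : Matrix (Fin N) (Fin N) ℝ := (sprad A)⁻¹ • A with hBdef
  have hBn : ∀ i j, 0 ≤ B i j := fun i j => by
    have : B i j = (sprad A)⁻¹ * A i j := rfl
    rw [this]
    exact mul_nonneg (inv_nonneg.2 hspr.le) (hA i j)
  have hBw : B *ᵥ w = w := by
    rw [hBdef, Matrix.smul_mulVec, hweig, inv_smul_smul₀ hl]
  obtain ⟨P, hconv, hPn, hBP, hPB, hPP⟩ := cesaro_main B hBn w hw hBw
  have hAB : A = sprad A • B := by rw [hBdef, smul_inv_smul₀ hl]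
  have hpow : ∀ i : ℕ, ((sprad A)⁻¹) ^ i • A ^ i = B ^ i := fun i => (smul_pow _ _ _).symm
  refine ⟨P, ?_, hPn, ?_, ?_, hPP⟩
  · simpa only [hpow] using hconv
  · conv_lhs => rw [hAB]
    rw [Matrix.smul_mul, hBP]
  · conv_lhs => rw [hAB]
    rw [Matrix.mul_smul, hPB]
end

section
/- Let A be a nonnegative N×N matrix with spectral radius λ > 0 possessing a strictly positive eigenvector, and let A* = lim_{n→∞} (1/(n+1)) ∑_{i=0}^{n} λ^{-i} A^i. Then the matrix λI − A + A* is nonsingular. -/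
open Matrix Filter Topology

lemma sum_mulVec_aux {N : ℕ} {ι : Type*} (s : Finset ι) (M : ι → Matrix (Fin N) (Fin N) ℝ)
    (v : Fin N → ℝ) : (∑ i ∈ s, M i) *ᵥ v = ∑ i ∈ s, M i *ᵥ v := by
  induction s using Finset.cons_induction with
  | empty => simp
  | cons a s ha ih => simp [Finset.sum_cons, Matrix.add_mulVec, ih]

theorem stmt7 {N : ℕ} (A : Matrix (Fin N) (Fin N) ℝ) (hA : ∀ i j, 0 ≤ A i j)
    (hspr : 0 < sprad A)
    (hpos : ∃ w : Fin N → ℝ, (∀ i, 0 < w i) ∧ A.mulVec w = sprad A • w)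
    (Astar : Matrix (Fin N) (Fin N) ℝ)
    (hlim : Tendsto (fun n : ℕ => (1 / ((n : ℝ) + 1)) •
        ∑ i ∈ Finset.range (n + 1), ((sprad A)⁻¹) ^ i • A ^ i) atTop (𝓝 Astar)) :
    IsUnit (sprad A • (1 : Matrix (Fin N) (Fin N) ℝ) - A + Astar) := by
  set r := sprad A with hrdef
  have hr0 : r ≠ 0 := ne_of_gt hspr
  let S : ℕ → Matrix (Fin N) (Fin N) ℝ :=
    fun n => (1 / ((n : ℝ) + 1)) • ∑ i ∈ Finset.range (n + 1), r⁻¹ ^ i • A ^ i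
  have hlim' : Tendsto S atTop (𝓝 Astar) := hlim
  have hSdef : ∀ n, S n = (1 / ((n : ℝ) + 1)) • ∑ i ∈ Finset.range (n + 1), r⁻¹ ^ i • A ^ i :=
    fun n => rfl
  have hcard : ∀ n : ℕ, (1 / ((n : ℝ) + 1)) * (((n + 1 : ℕ) : ℝ)) = 1 := by
    intro n
    have hn1 : ((n : ℝ) + 1) ≠ 0 := by positivity
    push_cast
    field_simp
  -- telescoping identities
  have key : ∀ n : ℕ, (∑ i ∈ Finset.range (n + 1), r⁻¹ ^ i • A ^ i) * (1 - r⁻¹ • A)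
      = 1 - r⁻¹ ^ (n + 1) • A ^ (n + 1) := by
    intro n
    have hterm : ∀ i : ℕ, (r⁻¹ ^ i • A ^ i) * (1 - r⁻¹ • A)
        = r⁻¹ ^ i • A ^ i - r⁻¹ ^ (i + 1) • A ^ (i + 1) := by
      intro i
      rw [mul_sub, mul_one, smul_mul_assoc, mul_smul_comm, smul_smul, ← pow_succ, ← pow_succ]
    rw [Finset.sum_mul]
    simp_rw [hterm]
    rw [Finset.sum_range_sub' (fun i => r⁻¹ ^ i • A ^ i)]
    simp
  have keyL : ∀ n : ℕ, (1 - r⁻¹ • A) * (∑ i ∈ Finset.range (n + 1), r⁻¹ ^ i • A ^ i)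
      = 1 - r⁻¹ ^ (n + 1) • A ^ (n + 1) := by
    intro n
    have hterm : ∀ i : ℕ, (1 - r⁻¹ • A) * (r⁻¹ ^ i • A ^ i)
        = r⁻¹ ^ i • A ^ i - r⁻¹ ^ (i + 1) • A ^ (i + 1) := by
      intro i
      rw [sub_mul, one_mul, smul_mul_assoc, mul_smul_comm, smul_smul, ← pow_succ', ← pow_succ']
    rw [Finset.mul_sum]
    simp_rw [hterm]
    rw [Finset.sum_range_sub' (fun i => r⁻¹ ^ i • A ^ i)]
    simp
  -- the tail term tends to zero
  have h1 : ∀ n : ℕ, (1 / ((n : ℝ) + 1)) • (r⁻¹ ^ (n + 1) • A ^ (n + 1))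
      = (((n : ℝ) + 2) / ((n : ℝ) + 1)) • S (n + 1) - S n := by
    intro n
    have hn1 : ((n : ℝ) + 1) ≠ 0 := by positivity
    have hn2 : ((n : ℝ) + 2) ≠ 0 := by positivity
    have e1 : S (n + 1) = (1 / ((n : ℝ) + 2)) • ∑ i ∈ Finset.range (n + 2), r⁻¹ ^ i • A ^ i := by
      rw [hSdef]
      congr 1
      push_cast
      ring
    have hc : (((n : ℝ) + 2) / ((n : ℝ) + 1)) * (1 / ((n : ℝ) + 2)) = 1 / ((n : ℝ) + 1) := by
      field_simp
    rw [e1, hSdef, smul_smul ((((n : ℝ)) + 2) / (((n : ℝ)) + 1)) (1 / (((n : ℝ)) + 2)),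
      hc, ← smul_sub, Finset.sum_range_succ]
    simp
  have hq : Tendsto (fun n : ℕ => ((n : ℝ) + 2) / ((n : ℝ) + 1)) atTop (𝓝 1) := by
    have h0 : Tendsto (fun n : ℕ => 1 / ((n : ℝ) + 1)) atTop (𝓝 0) :=
      tendsto_one_div_add_atTop_nhds_zero_nat
    have h1' := h0.const_add (1 : ℝ)
    rw [add_zero] at h1'
    refine h1'.congr fun n => ?_
    have hn1 : ((n : ℝ) + 1) ≠ 0 := by positivity
    field_simp
    ring
  have hsucc : Tendsto (fun n => S (n + 1)) atTop (𝓝 Astar) :=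
    hlim'.comp (tendsto_add_atTop_nat 1)
  have l1 : Tendsto (fun n : ℕ => (((n : ℝ) + 2) / ((n : ℝ) + 1)) • S (n + 1)) atTop
      (𝓝 Astar) := by
    have := hq.smul hsucc
    simpa using this
  have htail : Tendsto (fun n : ℕ => (1 / ((n : ℝ) + 1)) • (r⁻¹ ^ (n + 1) • A ^ (n + 1)))
      atTop (𝓝 0) := by
    have h2 := l1.sub hlim'
    rw [sub_self] at h2
    exact h2.congr fun n => (h1 n).symm
  have hone : Tendsto (fun n : ℕ => (1 / ((n : ℝ) + 1)) • (1 : Matrix (Fin N) (Fin N) ℝ))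
      atTop (𝓝 0) := by
    have := (tendsto_one_div_add_atTop_nhds_zero_nat :
        Tendsto (fun n : ℕ => 1 / ((n : ℝ) + 1)) atTop (𝓝 0)).smul
      (tendsto_const_nhds (x := (1 : Matrix (Fin N) (Fin N) ℝ)) (f := atTop))
    simpa using this
  have hrhs : Tendsto (fun n : ℕ => (1 / ((n : ℝ) + 1)) • (1 : Matrix (Fin N) (Fin N) ℝ)
      - (1 / ((n : ℝ) + 1)) • (r⁻¹ ^ (n + 1) • A ^ (n + 1))) atTop (𝓝 0) := by
    have := hone.sub htail
    simpa using this
  -- A* * (1 - r⁻¹ • A) = 0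
  have hA1 : Astar * (1 - r⁻¹ • A) = 0 := by
    have mr : Tendsto (fun n => S n * (1 - r⁻¹ • A)) atTop (𝓝 (Astar * (1 - r⁻¹ • A))) :=
      hlim'.mul tendsto_const_nhds
    have eq1 : ∀ n : ℕ, S n * (1 - r⁻¹ • A) = (1 / ((n : ℝ) + 1)) • (1 : Matrix (Fin N) (Fin N) ℝ)
        - (1 / ((n : ℝ) + 1)) • (r⁻¹ ^ (n + 1) • A ^ (n + 1)) := by
      intro n
      rw [hSdef, smul_mul_assoc, key n, smul_sub]
    exact tendsto_nhds_unique mr (hrhs.congr fun n => (eq1 n).symm)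
  -- (1 - r⁻¹ • A) * A* = 0
  have hA2 : (1 - r⁻¹ • A) * Astar = 0 := by
    have ml : Tendsto (fun n => (1 - r⁻¹ • A) * S n) atTop (𝓝 ((1 - r⁻¹ • A) * Astar)) :=
      tendsto_const_nhds.mul hlim'
    have eq2 : ∀ n : ℕ, (1 - r⁻¹ • A) * S n = (1 / ((n : ℝ) + 1)) • (1 : Matrix (Fin N) (Fin N) ℝ)
        - (1 / ((n : ℝ) + 1)) • (r⁻¹ ^ (n + 1) • A ^ (n + 1)) := by
      intro n
      rw [hSdef, mul_smul_comm, keyL n, smul_sub]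
    exact tendsto_nhds_unique ml (hrhs.congr fun n => (eq2 n).symm)
  have hAstarA : Astar * A = r • Astar := by
    rw [mul_sub, mul_one, mul_smul_comm, sub_eq_zero] at hA1
    calc Astar * A = r • (r⁻¹ • (Astar * A)) := by
          rw [smul_smul, mul_inv_cancel₀ hr0, one_smul]
      _ = r • Astar := by rw [← hA1]
  have hAAstar : A * Astar = r • Astar := by
    rw [sub_mul, one_mul, smul_mul_assoc, sub_eq_zero] at hA2
    calc A * Astar = r • (r⁻¹ • (A * Astar)) := by
          rw [smul_smul, mul_inv_cancel₀ hr0, one_smul]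
      _ = r • Astar := by rw [← hA2]
  -- A^i * A* = r^i • A*
  have hpowAstar : ∀ i : ℕ, A ^ i * Astar = r ^ i • Astar := by
    intro i
    induction i with
    | zero => simp
    | succ k ih =>
      rw [pow_succ', mul_assoc, ih, mul_smul_comm, hAAstar, smul_smul, ← pow_succ]
  have hSAstar : ∀ n : ℕ, S n * Astar = Astar := by
    intro n
    rw [hSdef, smul_mul_assoc, Finset.sum_mul]
    have hterm : ∀ i ∈ Finset.range (n + 1), (r⁻¹ ^ i • A ^ i) * Astar = Astar := by
      intro i _
      rw [smul_mul_assoc, hpowAstar i, smul_smul, ← mul_pow, inv_mul_cancel₀ hr0, one_pow,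
        one_smul]
    rw [Finset.sum_congr rfl hterm, Finset.sum_const, Finset.card_range,
      ← Nat.cast_smul_eq_nsmul ℝ, smul_smul, hcard n, one_smul]
  have hAstar2 : Astar * Astar = Astar :=
    tendsto_nhds_unique (hlim'.mul (tendsto_const_nhds (x := Astar)))
      (tendsto_const_nhds.congr fun n => (hSAstar n).symm)
  set M := r • (1 : Matrix (Fin N) (Fin N) ℝ) - A + Astar with hM
  have hAM : Astar * M = Astar := by
    rw [hM, mul_add, mul_sub, mul_smul_comm, mul_one, hAstarA, sub_self, zero_add, hAstar2]
  rw [Matrix.isUnit_iff_isUnit_det, isUnit_iff_ne_zero]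
  intro hdet
  obtain ⟨v, hv0, hv⟩ := Matrix.exists_mulVec_eq_zero_iff.mpr hdet
  have hAstarv : Astar *ᵥ v = 0 := by
    calc Astar *ᵥ v = (Astar * M) *ᵥ v := by rw [hAM]
      _ = Astar *ᵥ (M *ᵥ v) := by rw [← Matrix.mulVec_mulVec]
      _ = 0 := by rw [hv, Matrix.mulVec_zero]
  have hAv : A *ᵥ v = r • v := by
    have h := hv
    rw [hM, add_mulVec, sub_mulVec, smul_mulVec, one_mulVec, hAstarv, add_zero,
      sub_eq_zero] at h
    exact h.symm
  have hpowv : ∀ i : ℕ, (A ^ i) *ᵥ v = r ^ i • v := by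
    intro i
    induction i with
    | zero => simp
    | succ k ih =>
      rw [pow_succ', ← Matrix.mulVec_mulVec, ih, Matrix.mulVec_smul, hAv, smul_smul, ← pow_succ]
  have hSv : ∀ n : ℕ, S n *ᵥ v = v := by
    intro n
    rw [hSdef, smul_mulVec, sum_mulVec_aux]
    have hterm : ∀ i ∈ Finset.range (n + 1), (r⁻¹ ^ i • A ^ i) *ᵥ v = v := by
      intro i _
      rw [smul_mulVec, hpowv i, smul_smul, ← mul_pow, inv_mul_cancel₀ hr0, one_pow,
        one_smul]
    rw [Finset.sum_congr rfl hterm, Finset.sum_const, Finset.card_range,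
      ← Nat.cast_smul_eq_nsmul ℝ, smul_smul, hcard n, one_smul]
  have hvAstar : Astar *ᵥ v = v := by
    have hcont : Continuous fun B : Matrix (Fin N) (Fin N) ℝ => B *ᵥ v :=
      continuous_id.matrix_mulVec continuous_const
    have h1' : Tendsto (fun n => S n *ᵥ v) atTop (𝓝 (Astar *ᵥ v)) :=
      (hcont.tendsto Astar).comp hlim'
    exact tendsto_nhds_unique h1' (tendsto_const_nhds.congr fun n => (hSv n).symm)
  rw [hAstarv] at hvAstar
  exact hv0 hvAstar.symm
end

section
/- Let 𝒦 be a finite nonempty set of nonnegative N×N matrices all of which are irreducible, and suppose 𝒦 satisfies the product property. Then the map f(v) = min_{A∈𝒦} A v (componentwise minimum) has a strictly positive eigenvector w with f(w) = λ w, where λ = min_{A∈𝒦} spr(A). -/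
open Matrix Filter Topology

namespace PFAux

variable {N : ℕ}

lemma mul_nonneg_entries {A B : Matrix (Fin N) (Fin N) ℝ}
    (hA : ∀ i j, 0 ≤ A i j) (hB : ∀ i j, 0 ≤ B i j) : ∀ i j, 0 ≤ (A * B) i j := by
  intro i j
  rw [Matrix.mul_apply]
  exact Finset.sum_nonneg fun k _ => mul_nonneg (hA i k) (hB k j)

lemma pow_nonneg_entries {A : Matrix (Fin N) (Fin N) ℝ} (hA : ∀ i j, 0 ≤ A i j) :
    ∀ n, ∀ i j, 0 ≤ (A ^ n) i j := by
  intro n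
  induction n with
  | zero =>
    intro i j
    rw [pow_zero]
    by_cases h : i = j <;> simp [Matrix.one_apply, h]
  | succ n ih =>
    rw [pow_succ]
    exact mul_nonneg_entries ih hA

lemma onepow_nonneg {A : Matrix (Fin N) (Fin N) ℝ} (hA : ∀ i j, 0 ≤ A i j) :
    ∀ m : ℕ, ∀ i j, 0 ≤ ((1 + A) ^ m) i j := by
  refine pow_nonneg_entries ?_
  intro i j
  have : (0:ℝ) ≤ (1 : Matrix (Fin N) (Fin N) ℝ) i j := by
    by_cases h : i = j <;> simp [Matrix.one_apply, h]
  have := add_nonneg this (hA i j)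
  simpa [Matrix.add_apply] using this

lemma le_onepow {A : Matrix (Fin N) (Fin N) ℝ} (hA : ∀ i j, 0 ≤ A i j) :
    ∀ m k, k ≤ m → ∀ i j, (A ^ k) i j ≤ ((1 + A) ^ m) i j := by
  intro m
  induction m with
  | zero =>
    intro k hk i j
    interval_cases k
    simp
  | succ m ih =>
    intro k hk i j
    have hsplit : ((1 + A) ^ (m + 1)) i j
        = ((1 + A) ^ m) i j + ((1 + A) ^ m * A) i j := by
      rw [pow_succ, mul_add, mul_one, Matrix.add_apply]
    rw [hsplit]
    by_cases h : k ≤ m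
    · have h1 := ih k h i j
      have h2 : 0 ≤ ((1 + A) ^ m * A) i j :=
        mul_nonneg_entries (onepow_nonneg hA m) hA i j
      linarith
    · have hk' : k = m + 1 := by omega
      subst hk'
      have h1 : (A ^ (m + 1)) i j ≤ ((1 + A) ^ m * A) i j := by
        rw [pow_succ, Matrix.mul_apply, Matrix.mul_apply]
        refine Finset.sum_le_sum fun l _ => ?_
        exact mul_le_mul_of_nonneg_right (ih m le_rfl i l) (hA l j)
      have h2 : 0 ≤ ((1 + A) ^ m) i j := onepow_nonneg hA m i j
      linarith

lemma exists_pos_onepow {A : Matrix (Fin N) (Fin N) ℝ}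
    (hA : ∀ i j, 0 ≤ A i j) (hirr : Irred A) :
    ∃ m : ℕ, ∀ i j, 0 < ((1 + A) ^ m) i j := by
  choose n hn1 hnpos using hirr
  refine ⟨Finset.univ.sup (fun p : Fin N × Fin N => n p.1 p.2), fun i j => ?_⟩
  have hle : n i j ≤ Finset.univ.sup (fun p : Fin N × Fin N => n p.1 p.2) :=
    Finset.le_sup (f := fun p : Fin N × Fin N => n p.1 p.2) (Finset.mem_univ (i, j))
  exact lt_of_lt_of_le (hnpos i j) (le_onepow hA _ _ hle i j)

lemma mulVec_pos {B : Matrix (Fin N) (Fin N) ℝ} (hB : ∀ i j, 0 < B i j)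
    {v : Fin N → ℝ} (hv : ∀ i, 0 ≤ v i) (hv0 : ∃ j, 0 < v j) :
    ∀ i, 0 < (B *ᵥ v) i := by
  intro i
  obtain ⟨j0, hj0⟩ := hv0
  have : (B *ᵥ v) i = ∑ j, B i j * v j := by
    simp [Matrix.mulVec, dotProduct]
  rw [this]
  exact Finset.sum_pos' (fun j _ => mul_nonneg (hB i j).le (hv j))
    ⟨j0, Finset.mem_univ j0, mul_pos (hB i j0) hj0⟩

lemma cw_ub {C : Matrix (Fin N) (Fin N) ℝ} (hC : ∀ i j, 0 ≤ C i j)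
    {v : Fin N → ℝ} (hv : ∀ i, 0 ≤ v i) (hv0 : ∃ i, 0 < v i)
    {ρ : ℝ} (hρ : ∀ i, ρ * v i ≤ (C *ᵥ v) i)
    {u : Fin N → ℝ} (hu : ∀ i, 0 < u i)
    {μ : ℝ} (hμ : ∀ i, (C *ᵥ u) i ≤ μ * u i) : ρ ≤ μ := by
  obtain ⟨j0, hj0⟩ := hv0
  have hne : (Finset.univ : Finset (Fin N)).Nonempty := ⟨j0, Finset.mem_univ j0⟩
  obtain ⟨i1, -, hi1⟩ := Finset.exists_max_image Finset.univ (fun i => v i / u i) hne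
  set t := v i1 / u i1 with ht
  have htpos : 0 < t := lt_of_lt_of_le (div_pos hj0 (hu j0)) (hi1 j0 (Finset.mem_univ j0))
  have hvt : ∀ j, v j ≤ t * u j := fun j =>
    (div_le_iff₀ (hu j)).mp (hi1 j (Finset.mem_univ j))
  have hvi1 : v i1 = t * u i1 := by
    rw [ht, div_mul_cancel₀]
    exact (hu i1).ne'
  have hvi1pos : 0 < v i1 := by rw [hvi1]; exact mul_pos htpos (hu i1)
  have key : ρ * v i1 ≤ μ * v i1 := by
    calc ρ * v i1 ≤ (C *ᵥ v) i1 := hρ i1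
      _ ≤ t * (C *ᵥ u) i1 := by
          have h1 : (C *ᵥ v) i1 = ∑ j, C i1 j * v j := by
            simp [Matrix.mulVec, dotProduct]
          have h2 : (C *ᵥ u) i1 = ∑ j, C i1 j * u j := by
            simp [Matrix.mulVec, dotProduct]
          rw [h1, h2, Finset.mul_sum]
          refine Finset.sum_le_sum fun j _ => ?_
          calc C i1 j * v j ≤ C i1 j * (t * u j) :=
                mul_le_mul_of_nonneg_left (hvt j) (hC i1 j)
            _ = t * (C i1 j * u j) := by ring
      _ ≤ t * (μ * u i1) := mul_le_mul_of_nonneg_left (hμ i1) htpos.le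
      _ = μ * v i1 := by rw [hvi1]; ring
  exact le_of_mul_le_mul_right key hvi1pos

end PFAux

namespace PFAux

lemma perron {N : ℕ} (hN : 0 < N) (A : Matrix (Fin N) (Fin N) ℝ)
    (hA : ∀ i j, 0 ≤ A i j) (hirr : Irred A) :
    ∃ w : Fin N → ℝ, (∀ i, 0 < w i) ∧ ∀ i, (A *ᵥ w) i = sprad A * w i := by
  have hne : Nonempty (Fin N) := ⟨⟨0, hN⟩⟩
  have hNne : (N : ℝ) ≠ 0 := Nat.cast_ne_zero.mpr hN.ne'
  have hmv : ∀ (v : Fin N → ℝ) i, (A *ᵥ v) i = ∑ j, A i j * v j := fun v i => by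
    simp [Matrix.mulVec, dotProduct]
  set T : Set (ℝ × (Fin N → ℝ)) :=
    {p | 0 ≤ p.1 ∧ (∀ i, 0 ≤ p.2 i) ∧ (∑ i, p.2 i) = 1 ∧
      ∀ i, p.1 * p.2 i ≤ (A *ᵥ p.2) i} with hT
  -- T nonempty
  have hp0 : ((0 : ℝ), fun _ : Fin N => (N : ℝ)⁻¹) ∈ T := by
    refine ⟨le_rfl, fun i => by positivity, ?_, fun i => ?_⟩
    · simp [Finset.sum_const, Finset.card_univ, mul_inv_cancel₀ hNne]
    · rw [hmv]
      simp only [zero_mul]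
      exact Finset.sum_nonneg fun j _ => mul_nonneg (hA i j) (by positivity)
  -- T closed
  have hTclosed : IsClosed T := by
    have c2 : ∀ j : Fin N, Continuous fun p : ℝ × (Fin N → ℝ) => p.2 j :=
      fun j => (continuous_apply j).comp continuous_snd
    have cmv : ∀ i : Fin N, Continuous fun p : ℝ × (Fin N → ℝ) => (A *ᵥ p.2) i := by
      intro i
      have : (fun p : ℝ × (Fin N → ℝ) => (A *ᵥ p.2) i)
          = fun p => ∑ j, A i j * p.2 j := by
        funext p; exact hmv p.2 i
      rw [this]
      exact continuous_finset_sum _ fun j _ => continuous_const.mul (c2 j)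
    have h1 : IsClosed {p : ℝ × (Fin N → ℝ) | 0 ≤ p.1} :=
      isClosed_le continuous_const continuous_fst
    have h2 : IsClosed {p : ℝ × (Fin N → ℝ) | ∀ i, 0 ≤ p.2 i} := by
      have : {p : ℝ × (Fin N → ℝ) | ∀ i, 0 ≤ p.2 i}
          = ⋂ i, {p : ℝ × (Fin N → ℝ) | 0 ≤ p.2 i} := by
        ext p; simp
      rw [this]
      exact isClosed_iInter fun i => isClosed_le continuous_const (c2 i)
    have h3 : IsClosed {p : ℝ × (Fin N → ℝ) | (∑ i, p.2 i) = 1} :=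
      isClosed_eq (continuous_finset_sum _ fun j _ => c2 j) continuous_const
    have h4 : IsClosed {p : ℝ × (Fin N → ℝ) | ∀ i, p.1 * p.2 i ≤ (A *ᵥ p.2) i} := by
      have : {p : ℝ × (Fin N → ℝ) | ∀ i, p.1 * p.2 i ≤ (A *ᵥ p.2) i}
          = ⋂ i, {p : ℝ × (Fin N → ℝ) | p.1 * p.2 i ≤ (A *ᵥ p.2) i} := by
        ext p; simp
      rw [this]
      exact isClosed_iInter fun i =>
        isClosed_le (continuous_fst.mul (c2 i)) (cmv i)
    have : T = {p : ℝ × (Fin N → ℝ) | 0 ≤ p.1} ∩ ({p | ∀ i, 0 ≤ p.2 i} ∩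
        ({p | (∑ i, p.2 i) = 1} ∩ {p | ∀ i, p.1 * p.2 i ≤ (A *ᵥ p.2) i})) := by
      ext p; simp only [hT, Set.mem_setOf_eq, Set.mem_inter_iff]
    rw [this]
    exact h1.inter (h2.inter (h3.inter h4))
  -- T compact
  set M : ℝ := ∑ i, ∑ j, A i j with hM
  have hsub : T ⊆ Set.Icc (0:ℝ) M ×ˢ Set.Icc (0 : Fin N → ℝ) 1 := by
    rintro ⟨ρ, v⟩ ⟨hρ0, hv0, hvsum, hρv⟩
    have hv1 : ∀ j, v j ≤ 1 := by
      intro j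
      rw [← hvsum]
      exact Finset.single_le_sum (fun i _ => hv0 i) (Finset.mem_univ j)
    refine ⟨⟨hρ0, ?_⟩, fun i => hv0 i, fun i => hv1 i⟩
    calc ρ = ∑ i, ρ * v i := by rw [← Finset.mul_sum, hvsum, mul_one]
      _ ≤ ∑ i, (A *ᵥ v) i := Finset.sum_le_sum fun i _ => hρv i
      _ ≤ ∑ i, ∑ j, A i j := by
          refine Finset.sum_le_sum fun i _ => ?_
          rw [hmv]
          refine Finset.sum_le_sum fun j _ => ?_
          calc A i j * v j ≤ A i j * 1 := mul_le_mul_of_nonneg_left (hv1 j) (hA i j)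
            _ = A i j := mul_one _
  have hTcompact : IsCompact T :=
    IsCompact.of_isClosed_subset (isCompact_Icc.prod isCompact_Icc) hTclosed hsub
  -- maximize first coordinate
  obtain ⟨⟨r, w⟩, hmemT, hmax⟩ :=
    hTcompact.exists_isMaxOn ⟨_, hp0⟩ (continuous_fst.continuousOn)
  have hmax' : ∀ p ∈ T, p.1 ≤ r := fun p hp => hmax hp
  obtain ⟨hr0, hw0, hwsum, hrw⟩ := hmemT
  have hwpos_ex : ∃ j, 0 < w j := by
    by_contra h
    push_neg at h
    have : ∀ j, w j = 0 := fun j => le_antisymm (h j) (hw0 j)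
    simp only [this, Finset.sum_const_zero] at hwsum
    exact one_ne_zero hwsum.symm
  obtain ⟨m, hB⟩ := exists_pos_onepow hA hirr
  set B : Matrix (Fin N) (Fin N) ℝ := (1 + A) ^ m with hBdef
  have hcomm : A * B = B * A := by
    have h : Commute A (1 + A) := (Commute.one_right A).add_right (Commute.refl A)
    exact (h.pow_right m).eq
  -- A *ᵥ w = r • w
  have heq : ∀ i, (A *ᵥ w) i = r * w i := by
    by_contra h
    push_neg at h
    obtain ⟨i0, hi0⟩ := h
    have hi0' : r * w i0 < (A *ᵥ w) i0 := lt_of_le_of_ne (hrw i0) (Ne.symm hi0)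
    set g : Fin N → ℝ := fun i => (A *ᵥ w) i - r * w i with hg
    have hg0 : ∀ i, 0 ≤ g i := fun i => sub_nonneg.mpr (hrw i)
    have hgi0 : 0 < g i0 := sub_pos.mpr hi0'
    set u : Fin N → ℝ := B *ᵥ w with hu'
    have hu : ∀ i, 0 < u i := mulVec_pos hB hw0 hwpos_ex
    have hd : ∀ i, 0 < (A *ᵥ u) i - r * u i := by
      intro i
      have h1 : (A *ᵥ u) i - r * u i = (B *ᵥ g) i := by
        have e1 : A *ᵥ u = B *ᵥ (A *ᵥ w) := by
          rw [hu', Matrix.mulVec_mulVec, Matrix.mulVec_mulVec, hcomm]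
        have e2 : (B *ᵥ g) i = (B *ᵥ (A *ᵥ w)) i - r * (B *ᵥ w) i := by
          have : g = (A *ᵥ w) - r • w := by
            funext i; simp [hg, Pi.sub_apply, Pi.smul_apply, smul_eq_mul]
          rw [this, Matrix.mulVec_sub, Matrix.mulVec_smul]
          simp [Pi.sub_apply, Pi.smul_apply, smul_eq_mul]
        rw [e1, e2, hu']
      rw [h1]
      exact mulVec_pos hB hg0 ⟨i0, hgi0⟩ i
    obtain ⟨i1, -, hi1⟩ := Finset.exists_min_image Finset.univ
      (fun i => (A *ᵥ u) i / u i) ⟨Classical.arbitrary _, Finset.mem_univ _⟩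
    set t : ℝ := (A *ᵥ u) i1 / u i1 with htdef
    have hrt : r < t := by
      rw [htdef, lt_div_iff₀ (hu i1)]
      have := hd i1
      linarith
    have hts : ∀ i, t * u i ≤ (A *ᵥ u) i := by
      intro i
      have := hi1 i (Finset.mem_univ i)
      rw [le_div_iff₀ (hu i)] at this
      linarith [this]
    set s : ℝ := ∑ i, u i with hs
    have hspos : 0 < s := Finset.sum_pos (fun i _ => hu i) Finset.univ_nonempty
    have hmem2 : ((t, fun i => s⁻¹ * u i) : ℝ × (Fin N → ℝ)) ∈ T := by
      refine ⟨le_trans hr0 hrt.le, fun i => mul_nonneg (by positivity) (hu i).le, ?_, fun i => ?_⟩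
      · rw [← Finset.mul_sum, ← hs, inv_mul_cancel₀ hspos.ne']
      · have h1 : (A *ᵥ fun i => s⁻¹ * u i) i = s⁻¹ * (A *ᵥ u) i := by
          rw [hmv, hmv, Finset.mul_sum]
          exact Finset.sum_congr rfl fun j _ => by ring
        rw [h1]
        have := mul_le_mul_of_nonneg_left (hts i) (inv_nonneg.mpr hspos.le)
        calc t * (s⁻¹ * u i) = s⁻¹ * (t * u i) := by ring
          _ ≤ s⁻¹ * (A *ᵥ u) i := this
    have := hmax' _ hmem2
    simp only at this
    linarith
  -- w is strictly positive
  have hBw : ∀ k : ℕ, ((1 + A) ^ k) *ᵥ w = (1 + r) ^ k • w := by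
    intro k
    induction k with
    | zero => simp
    | succ k ih =>
      rw [pow_succ, ← Matrix.mulVec_mulVec]
      have h1 : (1 + A) *ᵥ w = (1 + r) • w := by
        funext i
        rw [Matrix.add_mulVec, Matrix.one_mulVec]
        simp only [Pi.add_apply, Pi.smul_apply, smul_eq_mul]
        rw [heq i]; ring
      rw [h1, Matrix.mulVec_smul, ih, pow_succ, smul_smul]
      ring_nf
  have hrpow : 0 < (1 + r) ^ m := pow_pos (by linarith) m
  have hwpos : ∀ i, 0 < w i := by
    intro i
    have h1 : 0 < (B *ᵥ w) i := mulVec_pos hB hw0 hwpos_ex i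
    rw [hBdef, hBw m] at h1
    simp only [Pi.smul_apply, smul_eq_mul] at h1
    nlinarith
  -- sprad A = r
  set Ac : Matrix (Fin N) (Fin N) ℂ := A.map (algebraMap ℝ ℂ) with hAc
  have hAcmv : ∀ (x : Fin N → ℂ) i, (Ac *ᵥ x) i = ∑ j, (A i j : ℂ) * x j := by
    intro x i
    simp [hAc, Matrix.mulVec, dotProduct, Matrix.map_apply, Complex.coe_algebraMap]
  have hspec : spectrum ℂ Ac = spectrum ℂ (Matrix.toLinAlgEquiv' Ac) :=
    (AlgEquiv.spectrum_eq (Matrix.toLinAlgEquiv' (R := ℂ)) Ac).symm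
  have hrmem : (r : ℂ) ∈ spectrum ℂ Ac := by
    rw [hspec, ← Module.End.hasEigenvalue_iff_mem_spectrum]
    refine Module.End.hasEigenvalue_of_hasEigenvector
      (x := fun i => (w i : ℂ)) ⟨Module.End.mem_eigenspace_iff.mpr ?_, ?_⟩
    · rw [Matrix.toLinAlgEquiv'_apply]
      funext i
      calc (Ac *ᵥ fun i => (w i : ℂ)) i = ∑ j, ((A i j : ℂ)) * (w j : ℂ) := hAcmv _ i
        _ = ((∑ j, A i j * w j : ℝ) : ℂ) := by push_cast; rfl
        _ = ((r * w i : ℝ) : ℂ) := by rw [← hmv, heq i]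
        _ = ((r : ℂ) • fun i => (w i : ℂ)) i := by
            simp only [Pi.smul_apply, smul_eq_mul]; push_cast; ring
    · intro hx
      have := congrFun hx (Classical.arbitrary (Fin N))
      simp only [Pi.zero_apply, Complex.ofReal_eq_zero] at this
      exact (hwpos _).ne' this
  have hub : ∀ z ∈ spectrum ℂ Ac, ‖z‖ ≤ r := by
    intro z hz
    rw [hspec, ← Module.End.hasEigenvalue_iff_mem_spectrum] at hz
    obtain ⟨x, hx⟩ := hz.exists_hasEigenvector
    have hxeq : Ac *ᵥ x = z • x := by
      have := Module.End.mem_eigenspace_iff.mp hx.1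
      rwa [Matrix.toLinAlgEquiv'_apply] at this
    set v : Fin N → ℝ := fun i => ‖x i‖ with hv
    have hv0 : ∀ i, 0 ≤ v i := fun i => norm_nonneg _
    have hvex : ∃ i, 0 < v i := by
      obtain ⟨i, hi⟩ := Function.ne_iff.mp hx.2
      exact ⟨i, norm_pos_iff.mpr hi⟩
    have hineq : ∀ i, ‖z‖ * v i ≤ (A *ᵥ v) i := by
      intro i
      have h1 : ‖z‖ * v i = ‖(Ac *ᵥ x) i‖ := by
        rw [hxeq]
        simp only [hv, Pi.smul_apply, smul_eq_mul, norm_mul]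
      rw [h1, hAcmv, hmv]
      refine le_trans (norm_sum_le _ _) ?_
      refine Finset.sum_le_sum fun j _ => ?_
      rw [norm_mul, Complex.norm_real, Real.norm_eq_abs, abs_of_nonneg (hA i j)]
    set s : ℝ := ∑ i, v i with hs
    have hspos : 0 < s := by
      obtain ⟨i, hi⟩ := hvex
      exact Finset.sum_pos' (fun j _ => hv0 j) ⟨i, Finset.mem_univ i, hi⟩
    have hmem2 : ((‖z‖, fun i => s⁻¹ * v i) : ℝ × (Fin N → ℝ)) ∈ T := by
      refine ⟨norm_nonneg _, fun i => by positivity, ?_, fun i => ?_⟩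
      · rw [← Finset.mul_sum, ← hs, inv_mul_cancel₀ hspos.ne']
      · have h1 : (A *ᵥ fun i => s⁻¹ * v i) i = s⁻¹ * (A *ᵥ v) i := by
          rw [hmv, hmv, Finset.mul_sum]
          exact Finset.sum_congr rfl fun j _ => by ring
        rw [h1]
        have := mul_le_mul_of_nonneg_left (hineq i) (inv_nonneg.mpr hspos.le)
        calc ‖z‖ * (s⁻¹ * v i) = s⁻¹ * (‖z‖ * v i) := by ring
          _ ≤ s⁻¹ * (A *ᵥ v) i := this
    exact hmax' _ hmem2
  have hsprad : sprad A = r := by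
    have hrE : r ∈ (fun z : ℂ => ‖z‖) '' spectrum ℂ Ac :=
      ⟨(r : ℂ), hrmem, by show ‖(r : ℂ)‖ = r; rw [Complex.norm_real, Real.norm_eq_abs, abs_of_nonneg hr0]⟩
    have hubE : ∀ y ∈ (fun z : ℂ => ‖z‖) '' spectrum ℂ Ac, y ≤ r := by
      rintro y ⟨z, hz, rfl⟩
      exact hub z hz
    rw [sprad]
    exact le_antisymm (csSup_le ⟨r, hrE⟩ hubE) (le_csSup ⟨r, hubE⟩ hrE)
  exact ⟨w, hwpos, fun i => by rw [hsprad]; exact heq i⟩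

end PFAux

namespace PFAux

lemma sprad_lt {N : ℕ} (hN : 0 < N) (C : Matrix (Fin N) (Fin N) ℝ)
    (hC : ∀ i j, 0 ≤ C i j) (hirr : Irred C)
    (w : Fin N → ℝ) (hw : ∀ i, 0 < w i) (l : ℝ)
    (hle : ∀ i, (C *ᵥ w) i ≤ l * w i) (i0 : Fin N)
    (hst : (C *ᵥ w) i0 < l * w i0) : sprad C < l := by
  have hne : Nonempty (Fin N) := ⟨⟨0, hN⟩⟩
  obtain ⟨v, hv, hvC⟩ := perron hN C hC hirr
  obtain ⟨m, hB⟩ := exists_pos_onepow hC hirr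
  set B : Matrix (Fin N) (Fin N) ℝ := (1 + C) ^ m with hBdef
  have hcomm : C * B = B * C := by
    have h : Commute C (1 + C) := (Commute.one_right C).add_right (Commute.refl C)
    exact (h.pow_right m).eq
  set g : Fin N → ℝ := fun i => l * w i - (C *ᵥ w) i with hg
  have hg0 : ∀ i, 0 ≤ g i := fun i => sub_nonneg.mpr (hle i)
  have hgi0 : 0 < g i0 := sub_pos.mpr hst
  set u : Fin N → ℝ := B *ᵥ w with hu'
  have hu : ∀ i, 0 < u i := mulVec_pos hB (fun i => (hw i).le) ⟨i0, hw i0⟩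
  have hd : ∀ i, (C *ᵥ u) i < l * u i := by
    intro i
    have h1 : l * u i - (C *ᵥ u) i = (B *ᵥ g) i := by
      have e1 : C *ᵥ u = B *ᵥ (C *ᵥ w) := by
        rw [hu', Matrix.mulVec_mulVec, Matrix.mulVec_mulVec, hcomm]
      have e2 : (B *ᵥ g) i = l * (B *ᵥ w) i - (B *ᵥ (C *ᵥ w)) i := by
        have hgf : g = l • w - (C *ᵥ w) := by
          funext i; simp [hg, Pi.sub_apply, Pi.smul_apply, smul_eq_mul]
        rw [hgf, Matrix.mulVec_sub, Matrix.mulVec_smul]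
        simp [Pi.sub_apply, Pi.smul_apply, smul_eq_mul]
      rw [e2, e1, hu']
    have h2 : 0 < (B *ᵥ g) i := mulVec_pos hB hg0 ⟨i0, hgi0⟩ i
    linarith
  obtain ⟨i1, -, hi1⟩ := Finset.exists_max_image Finset.univ
    (fun i => (C *ᵥ u) i / u i) ⟨Classical.arbitrary _, Finset.mem_univ _⟩
  set μ : ℝ := (C *ᵥ u) i1 / u i1 with hμdef
  have hμl : μ < l := by
    rw [hμdef, div_lt_iff₀ (hu i1)]
    have := hd i1
    linarith
  have hμs : ∀ i, (C *ᵥ u) i ≤ μ * u i := by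
    intro i
    have := hi1 i (Finset.mem_univ i)
    rw [div_le_iff₀ (hu i)] at this
    linarith [this]
  have hρ : ∀ i, sprad C * v i ≤ (C *ᵥ v) i := fun i => (hvC i).ge
  have := cw_ub hC (fun i => (hv i).le) ⟨Classical.arbitrary _, hv _⟩ hρ hu hμs
  linarith

end PFAux

theorem stmt11 {N : ℕ} (K : Finset (Matrix (Fin N) (Fin N) ℝ)) (hK : K.Nonempty)
    (hnn : ∀ A ∈ K, ∀ i j, 0 ≤ A i j) (hirr : ∀ A ∈ K, Irred A)
    (hprod : ProdProp K) :
    ∃ w : Fin N → ℝ, (∀ i, 0 < w i) ∧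
      ∀ i, (K.inf' hK fun A => A.mulVec w i) = (K.inf' hK fun A => sprad A) * w i := by
  rcases Nat.eq_zero_or_pos N with h0 | hN
  · subst h0
    exact ⟨fun _ => 1, fun i => i.elim0, fun i => i.elim0⟩
  obtain ⟨A₀, hA₀K, hA₀⟩ := Finset.exists_mem_eq_inf' hK (fun A => sprad A)
  obtain ⟨w, hw, hweq⟩ := PFAux.perron hN A₀ (hnn A₀ hA₀K) (hirr A₀ hA₀K)
  have hmin : ∀ B ∈ K, sprad A₀ ≤ sprad B := by
    intro B hB
    rw [← hA₀]
    exact Finset.inf'_le _ hB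
  have claim : ∀ B ∈ K, ∀ i, sprad A₀ * w i ≤ (B *ᵥ w) i := by
    by_contra h
    push_neg at h
    obtain ⟨B, hB, i0, hi0⟩ := h
    set Cm : Matrix (Fin N) (Fin N) ℝ :=
      Matrix.of fun i j => if i ∈ ({i0} : Finset (Fin N)) then B i j else A₀ i j with hCm
    have hCmK : Cm ∈ K := hprod B hB A₀ hA₀K {i0}
    have hCmrow : ∀ i, (Cm *ᵥ w) i = if i = i0 then (B *ᵥ w) i else (A₀ *ᵥ w) i := by
      intro i
      simp only [hCm, Matrix.mulVec, dotProduct, Matrix.of_apply,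
        Finset.mem_singleton]
      split <;> rfl
    have hle : ∀ i, (Cm *ᵥ w) i ≤ sprad A₀ * w i := by
      intro i
      rw [hCmrow i]
      split
      · next hi => rw [hi]; exact hi0.le
      · rw [hweq i]
    have hstr : (Cm *ᵥ w) i0 < sprad A₀ * w i0 := by
      rw [hCmrow i0]
      simpa using hi0
    have := PFAux.sprad_lt hN Cm (hnn Cm hCmK) (hirr Cm hCmK) w hw (sprad A₀) hle i0 hstr
    exact absurd (hmin Cm hCmK) (not_le.mpr this)
  refine ⟨w, hw, fun i => ?_⟩
  rw [hA₀]
  apply le_antisymm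
  · calc K.inf' hK (fun A => A.mulVec w i) ≤ A₀.mulVec w i := Finset.inf'_le _ hA₀K
      _ = sprad A₀ * w i := hweq i
  · exact Finset.le_inf' hK _ fun B hB => claim B hB i
end

section
/- Let A be a nonnegative N×N matrix with spectral radius λ. Then A possesses a strictly positive eigenvector if and only if every final class of A is basic and every basic class of A is final. -/
open Matrix Filter Topology

namespace PF

open scoped ENNReal NNReal

attribute [local instance] Matrix.linftyOpNormedAddCommGroup Matrix.linftyOpNormedRing
  Matrix.linftyOpNormedAlgebra

variable {ι : Type*} [Fintype ι] [DecidableEq ι]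

/-- Complexification of a real matrix. -/
noncomputable def cmap (B : Matrix ι ι ℝ) : Matrix ι ι ℂ := B.map (algebraMap ℝ ℂ)

lemma sprad_def (B : Matrix ι ι ℝ) : sprad B = sSup ((fun z : ℂ => ‖z‖) '' spectrum ℂ (cmap B)) := rfl

lemma cmap_pow (B : Matrix ι ι ℝ) (k : ℕ) : cmap (B ^ k) = cmap B ^ k := by
  show (algebraMap ℝ ℂ).mapMatrix (B ^ k) = ((algebraMap ℝ ℂ).mapMatrix B) ^ k
  exact map_pow _ B k

lemma cmap_mulVec (B : Matrix ι ι ℝ) (v : ι → ℝ) :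
    (cmap B).mulVec (fun j => (v j : ℂ)) = fun i => ((B.mulVec v i : ℝ) : ℂ) := by
  funext i
  simp only [cmap, Matrix.mulVec, dotProduct, Matrix.map_apply]
  push_cast
  rfl

lemma norm_cmap (B : Matrix ι ι ℝ) : ‖cmap B‖ = ‖B‖ := by
  rw [← coe_nnnorm, ← coe_nnnorm]
  congr 1
  rw [Matrix.linfty_opNNNorm_def, Matrix.linfty_opNNNorm_def]
  congr 1
  funext i
  congr 1
  funext j
  simp [cmap, Matrix.map_apply]

lemma entry_abs_le_norm (M : Matrix ι ι ℝ) (i j : ι) : |M i j| ≤ ‖M‖ := by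
  have h1 : ‖M i j‖₊ ≤ ‖M‖₊ := by
    rw [Matrix.linfty_opNNNorm_def]
    refine le_trans ?_ (Finset.le_sup (f := fun i => ∑ k, ‖M i k‖₊) (Finset.mem_univ i))
    exact Finset.single_le_sum (f := fun k => ‖M i k‖₊) (fun k _ => zero_le) (Finset.mem_univ j)
  calc |M i j| = ‖M i j‖ := (Real.norm_eq_abs _).symm
    _ ≤ ‖M‖ := h1

lemma mem_spectrum_iff (M : Matrix ι ι ℂ) (z : ℂ) :
    z ∈ spectrum ℂ M ↔ ∃ x, x ≠ 0 ∧ M.mulVec x = z • x := by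
  rw [spectrum.mem_iff]
  rw [Matrix.isUnit_iff_isUnit_det, isUnit_iff_ne_zero, not_not]
  rw [← Matrix.exists_mulVec_eq_zero_iff]
  constructor
  · rintro ⟨v, hv, hv2⟩
    refine ⟨v, hv, ?_⟩
    have : (algebraMap ℂ (Matrix ι ι ℂ) z - M).mulVec v = z • v - M.mulVec v := by
      rw [Matrix.sub_mulVec, Algebra.algebraMap_eq_smul_one, Matrix.smul_mulVec,
        Matrix.one_mulVec]
    rw [this] at hv2
    exact (sub_eq_zero.mp hv2).symm
  · rintro ⟨v, hv, hv2⟩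
    refine ⟨v, hv, ?_⟩
    rw [Matrix.sub_mulVec, Algebra.algebraMap_eq_smul_one, Matrix.smul_mulVec,
      Matrix.one_mulVec, hv2, sub_self]

lemma spectrum_nonempty [Nonempty ι] (M : Matrix ι ι ℂ) : (spectrum ℂ M).Nonempty := by
  haveI : Nontrivial (Matrix ι ι ℂ) := ⟨1, 0, by
    intro h
    have := congrFun (congrFun h (Classical.arbitrary ι)) (Classical.arbitrary ι)
    simp [Matrix.one_apply] at this⟩
  exact spectrum.nonempty_of_isAlgClosed_of_finiteDimensional ℂ M

lemma abs_le_sprad {B : Matrix ι ι ℝ} {z : ℂ} (hz : z ∈ spectrum ℂ (cmap B)) :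
    ‖z‖ ≤ sprad B := by
  have hfin : ((fun z : ℂ => ‖z‖) '' spectrum ℂ (cmap B)).Finite :=
    (Matrix.finite_spectrum _).image _
  exact le_csSup hfin.bddAbove ⟨z, hz, rfl⟩

lemma exists_abs_eq_sprad [Nonempty ι] (B : Matrix ι ι ℝ) :
    ∃ z ∈ spectrum ℂ (cmap B), ‖z‖ = sprad B := by
  have hfin : ((fun z : ℂ => ‖z‖) '' spectrum ℂ (cmap B)).Finite :=
    (Matrix.finite_spectrum _).image _
  have hne : ((fun z : ℂ => ‖z‖) '' spectrum ℂ (cmap B)).Nonempty :=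
    (spectrum_nonempty (cmap B)).image _
  have := hne.csSup_mem hfin
  rw [← sprad_def] at this
  obtain ⟨z, hz, hz2⟩ := this
  exact ⟨z, hz, hz2⟩

lemma sprad_nonneg [Nonempty ι] (B : Matrix ι ι ℝ) : 0 ≤ sprad B := by
  obtain ⟨z, _, hz2⟩ := exists_abs_eq_sprad B
  rw [← hz2]
  exact norm_nonneg z

lemma sprad_zero [Nonempty ι] : sprad (0 : Matrix ι ι ℝ) = 0 := by
  obtain ⟨z, hz, hz2⟩ := exists_abs_eq_sprad (0 : Matrix ι ι ℝ)
  have hc : cmap (0 : Matrix ι ι ℝ) = 0 := by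
    funext i j; simp [cmap, Matrix.map_apply]
  rw [hc, mem_spectrum_iff] at hz
  obtain ⟨x, hx, hx2⟩ := hz
  rw [Matrix.zero_mulVec] at hx2
  obtain ⟨i, hi⟩ := Function.ne_iff.mp hx
  have : z * x i = 0 := by
    have := congrFun hx2 i
    simpa using this.symm
  rcases mul_eq_zero.mp this with h | h
  · rw [← hz2, h]; simp
  · exact absurd h hi

lemma spectralRadius_eq [Nonempty ι] (B : Matrix ι ι ℝ) :
    spectralRadius ℂ (cmap B) = ENNReal.ofReal (sprad B) := by
  obtain ⟨z0, hz0, hz02⟩ := exists_abs_eq_sprad B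
  apply le_antisymm
  · refine iSup₂_le fun z hz => ?_
    rw [← enorm_eq_nnnorm, ← ofReal_norm]
    exact ENNReal.ofReal_le_ofReal (le_trans (le_of_eq rfl) (abs_le_sprad hz))
  · calc ENNReal.ofReal (sprad B) = (‖z0‖₊ : ℝ≥0∞) := by
          rw [← enorm_eq_nnnorm, ← ofReal_norm, hz02]
      _ ≤ spectralRadius ℂ (cmap B) := le_iSup₂ (f := fun k _ => (‖k‖₊ : ℝ≥0∞)) z0 hz0

lemma gelfand [Nonempty ι] (B : Matrix ι ι ℝ) :
    Tendsto (fun k : ℕ => ‖B ^ k‖ ^ (1 / (k : ℝ))) atTop (𝓝 (sprad B)) := by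
  haveI : CompleteSpace (Matrix ι ι ℂ) := FiniteDimensional.complete ℂ _
  have h := spectrum.pow_norm_pow_one_div_tendsto_nhds_spectralRadius (cmap B)
  rw [spectralRadius_eq] at h
  have h2 := (ENNReal.tendsto_toReal (by simp : ENNReal.ofReal (sprad B) ≠ ⊤)).comp h
  rw [ENNReal.toReal_ofReal (sprad_nonneg B)] at h2
  convert h2 using 2 with k
  rw [Function.comp_apply, ENNReal.toReal_ofReal (Real.rpow_nonneg (norm_nonneg _) _)]
  rw [← cmap_pow, norm_cmap]

lemma exists_pow_norm_lt [Nonempty ι] {B : Matrix ι ι ℝ} {ρ : ℝ} (h : sprad B < ρ) :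
    ∃ m, 1 ≤ m ∧ ‖B ^ m‖ < ρ ^ m := by
  have hev : ∀ᶠ k : ℕ in atTop, ‖B ^ k‖ ^ (1 / (k : ℝ)) < ρ :=
    (gelfand B).eventually_lt_const h
  obtain ⟨m, hm1, hm2⟩ := ((eventually_ge_atTop 1).and hev).exists
  refine ⟨m, hm1, ?_⟩
  have hm0 : (m : ℝ) ≠ 0 := Nat.cast_ne_zero.mpr (by omega)
  have key : (‖B ^ m‖ ^ (1 / (m : ℝ))) ^ m = ‖B ^ m‖ := by
    rw [← Real.rpow_natCast (‖B ^ m‖ ^ (1 / (m : ℝ))) m, ← Real.rpow_mul (norm_nonneg _),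
      one_div_mul_cancel hm0, Real.rpow_one]
  rw [← key]
  exact pow_lt_pow_left₀ hm2 (Real.rpow_nonneg (norm_nonneg _) _) (by omega)

lemma le_sprad_of_pow_norm [Nonempty ι] {B : Matrix ι ι ℝ} {c d : ℝ} (hc : 0 ≤ c) (hd : 0 < d)
    (hd1 : d ≤ 1) (h : ∀ k : ℕ, c ^ k * d ≤ ‖B ^ k‖) : c ≤ sprad B := by
  rcases eq_or_lt_of_le hc with rfl | hc'
  · exact sprad_nonneg B
  by_contra hcon
  push_neg at hcon
  set ρ : ℝ := (sprad B + c) / 2 with hρ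
  have hρ1 : sprad B < ρ := by
    rw [hρ]; linarith
  have hρ2 : ρ < c := by rw [hρ]; linarith
  have hρ0 : 0 < ρ := lt_of_le_of_lt (sprad_nonneg B) hρ1
  obtain ⟨m, hm1, hm2⟩ := exists_pow_norm_lt hρ1
  have key : ∀ k : ℕ, 1 ≤ k → (c ^ m) ^ k * d ≤ (ρ ^ m) ^ k := by
    intro k hk
    calc (c ^ m) ^ k * d = c ^ (m * k) * d := by rw [← pow_mul]
      _ ≤ ‖B ^ (m * k)‖ := h _
      _ = ‖(B ^ m) ^ k‖ := by rw [← pow_mul]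
      _ ≤ ‖B ^ m‖ ^ k := norm_pow_le' _ (by omega)
      _ ≤ (ρ ^ m) ^ k := pow_le_pow_left₀ (norm_nonneg _) hm2.le k
  have ht : 1 < (c / ρ) ^ m := by
    apply one_lt_pow₀
    · rw [lt_div_iff₀ hρ0]; linarith
    · omega
  obtain ⟨k, hk⟩ := pow_unbounded_of_one_lt (1 / d) ht
  set k' := max k 1 with hk'
  have hk1 : (1:ℝ) / d < ((c / ρ) ^ m) ^ k' :=
    lt_of_lt_of_le hk (pow_le_pow_right₀ ht.le (le_max_left k 1))
  have h2 := key k' (le_max_right k 1)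
  have hcm : (0:ℝ) < (c ^ m) ^ k' := pow_pos (pow_pos hc' m) k'
  have hρm : (0:ℝ) < (ρ ^ m) ^ k' := pow_pos (pow_pos hρ0 m) k'
  have hexp : ((c / ρ) ^ m) ^ k' = (c ^ m) ^ k' / (ρ ^ m) ^ k' := by
    rw [div_pow, div_pow]
  rw [hexp, div_lt_div_iff₀ hd hρm] at hk1
  nlinarith [hk1, h2]

lemma sprad_mono_norm {ι' : Type*} [Fintype ι'] [DecidableEq ι'] [Nonempty ι'] [Nonempty ι]
    {B : Matrix ι ι ℝ} {B' : Matrix ι' ι' ℝ} (h : ∀ k : ℕ, ‖B' ^ k‖ ≤ ‖B ^ k‖) :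
    sprad B' ≤ sprad B := by
  refine le_of_tendsto_of_tendsto' (gelfand B') (gelfand B) fun k => ?_
  exact Real.rpow_le_rpow (norm_nonneg _) (h k) (by positivity)

lemma sprad_pow [Nonempty ι] (B : Matrix ι ι ℝ) {n : ℕ} (hn : 1 ≤ n) :
    sprad (B ^ n) = sprad B ^ n := by
  have hspec : spectrum ℂ (cmap (B ^ n)) = (· ^ n) '' spectrum ℂ (cmap B) := by
    rw [cmap_pow]; exact spectrum.map_pow_of_pos (cmap B) hn
  apply le_antisymm
  · obtain ⟨z, hz, hz2⟩ := exists_abs_eq_sprad (B ^ n)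
    rw [hspec] at hz
    obtain ⟨w, hw, rfl⟩ := hz
    rw [← hz2, norm_pow]
    exact pow_le_pow_left₀ (norm_nonneg w) (abs_le_sprad hw) n
  · obtain ⟨w, hw, hw2⟩ := exists_abs_eq_sprad B
    have hmem : w ^ n ∈ spectrum ℂ (cmap (B ^ n)) := by
      rw [hspec]; exact ⟨w, hw, rfl⟩
    calc sprad B ^ n = ‖w ^ n‖ := by rw [norm_pow, hw2]
      _ ≤ sprad (B ^ n) := abs_le_sprad hmem

section NonnegBasic

variable {B : Matrix ι ι ℝ}

lemma pow_entry_nonneg (hB : ∀ i j, 0 ≤ B i j) (k : ℕ) (i j : ι) : 0 ≤ (B ^ k) i j := by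
  induction k generalizing i j with
  | zero => rw [pow_zero]; by_cases h : i = j <;> simp [Matrix.one_apply, h]
  | succ k ih =>
    rw [pow_succ, Matrix.mul_apply]
    exact Finset.sum_nonneg fun l _ => mul_nonneg (ih i l) (hB l j)

lemma entry_mul_le {X Y : Matrix ι ι ℝ} (hX : ∀ i j, 0 ≤ X i j) (hY : ∀ i j, 0 ≤ Y i j)
    (i j k : ι) : X i j * Y j k ≤ (X * Y) i k := by
  rw [Matrix.mul_apply]
  refine Finset.single_le_sum (f := fun l => X i l * Y l k) ?_ (Finset.mem_univ j)
  exact fun l _ => mul_nonneg (hX i l) (hY l k)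

lemma pow_mul_pow_le (hB : ∀ i j, 0 ≤ B i j) (m n : ℕ) (i j k : ι) :
    (B ^ m) i j * (B ^ n) j k ≤ (B ^ (m + n)) i k := by
  rw [pow_add]
  exact entry_mul_le (pow_entry_nonneg hB m) (pow_entry_nonneg hB n) i j k

lemma mulVec_nonneg (hB : ∀ i j, 0 ≤ B i j) {v : ι → ℝ} (hv : ∀ j, 0 ≤ v j) (i : ι) :
    0 ≤ B.mulVec v i := by
  exact Finset.sum_nonneg fun j _ => mul_nonneg (hB i j) (hv j)

lemma entry_mulVec_le (hB : ∀ i j, 0 ≤ B i j) {v : ι → ℝ} (hv : ∀ j, 0 ≤ v j) (i j : ι) :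
    B i j * v j ≤ B.mulVec v i := by
  refine Finset.single_le_sum (f := fun l => B i l * v l) ?_ (Finset.mem_univ j)
  exact fun l _ => mul_nonneg (hB i l) (hv l)

lemma mulVec_mono (hB : ∀ i j, 0 ≤ B i j) {v w : ι → ℝ} (hvw : ∀ j, v j ≤ w j) (i : ι) :
    B.mulVec v i ≤ B.mulVec w i := by
  refine Finset.sum_le_sum fun j _ => ?_
  exact mul_le_mul_of_nonneg_left (hvw j) (hB i j)

lemma pow_mulVec_succ (B : Matrix ι ι ℝ) (v : ι → ℝ) (n : ℕ) :
    (B ^ (n + 1)).mulVec v = B.mulVec ((B ^ n).mulVec v) := by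
  rw [pow_succ', ← Matrix.mulVec_mulVec]

lemma mulVec_smul_entry (B : Matrix ι ι ℝ) (c : ℝ) (v : ι → ℝ) (i : ι) :
    B.mulVec (fun j => c * v j) i = c * B.mulVec v i := by
  simp [Matrix.mulVec, dotProduct, Finset.mul_sum, mul_left_comm]

lemma mulVec_add_entry (B : Matrix ι ι ℝ) (x y : ι → ℝ) (i : ι) :
    B.mulVec (fun j => x j + y j) i = B.mulVec x i + B.mulVec y i := by
  simp [Matrix.mulVec, dotProduct, mul_add, Finset.sum_add_distrib]

lemma subinv_pow (hB : ∀ i j, 0 ≤ B i j) {v : ι → ℝ} {μ : ℝ} (hv : ∀ j, 0 ≤ v j) (hμ : 0 ≤ μ)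
    (h : ∀ i, B.mulVec v i ≤ μ * v i) (n : ℕ) (i : ι) :
    (B ^ n).mulVec v i ≤ μ ^ n * v i := by
  induction n generalizing i with
  | zero => simp [Matrix.one_mulVec]
  | succ n ih =>
    rw [pow_mulVec_succ]
    calc B.mulVec ((B ^ n).mulVec v) i ≤ B.mulVec (fun j => μ ^ n * v j) i :=
          mulVec_mono hB (fun j => ih j) i
      _ = μ ^ n * B.mulVec v i := mulVec_smul_entry B _ v i
      _ ≤ μ ^ n * (μ * v i) := mul_le_mul_of_nonneg_left (h i) (pow_nonneg hμ n)
      _ = μ ^ (n + 1) * v i := by ring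

lemma superinv_pow (hB : ∀ i j, 0 ≤ B i j) {v : ι → ℝ} {c : ℝ} (hv : ∀ j, 0 ≤ v j) (hc : 0 ≤ c)
    (h : ∀ i, c * v i ≤ B.mulVec v i) (n : ℕ) (i : ι) :
    c ^ n * v i ≤ (B ^ n).mulVec v i := by
  induction n generalizing i with
  | zero => simp [Matrix.one_mulVec]
  | succ n ih =>
    rw [pow_mulVec_succ]
    calc c ^ (n + 1) * v i = c ^ n * (c * v i) := by ring
      _ ≤ c ^ n * B.mulVec v i := mul_le_mul_of_nonneg_left (h i) (pow_nonneg hc n)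
      _ = B.mulVec (fun j => c ^ n * v j) i := (mulVec_smul_entry B _ v i).symm
      _ ≤ B.mulVec ((B ^ n).mulVec v) i := by
          refine mulVec_mono hB (fun j => ?_) i
          calc c ^ n * v j = c ^ n * v j := rfl
            _ ≤ (B ^ n).mulVec v j := ih j

lemma superinv_telescope (hB : ∀ i j, 0 ≤ B i j) {w : ι → ℝ} {r : ℝ} (hw : ∀ j, 0 ≤ w j)
    (hr : 0 ≤ r) (h : ∀ i, r * w i ≤ B.mulVec w i) {m n : ℕ} (hmn : m < n) (i : ι) :
    r ^ (n - 1 - m) * ((B ^ m).mulVec (fun j => B.mulVec w j - r * w j)) i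
      ≤ (B ^ n).mulVec w i - r ^ n * w i := by
  set d : ι → ℝ := fun j => B.mulVec w j - r * w j with hd
  have hδ : ∀ j, 0 ≤ d j := fun j => sub_nonneg.mpr (h j)
  have hBw : B.mulVec w = fun j => d j + r * w j := by funext j; simp only [hd]; ring
  induction n generalizing i with
  | zero => omega
  | succ n ih =>
    have hstep : (B ^ (n + 1)).mulVec w i
        = (B ^ n).mulVec d i + r * (B ^ n).mulVec w i := by
      rw [pow_succ, ← Matrix.mulVec_mulVec, hBw, mulVec_add_entry, mulVec_smul_entry]
    rcases Nat.lt_succ_iff_lt_or_eq.mp hmn with hm | rfl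
    · have ihm := ih hm i
      have hnn : 0 ≤ (B ^ n).mulVec d i := mulVec_nonneg (pow_entry_nonneg hB n) hδ i
      have hexp : n + 1 - 1 - m = (n - 1 - m) + 1 := by omega
      have hp : r ^ (n + 1) = r * r ^ n := by ring
      rw [hstep, hexp, pow_succ]
      have h2 : r * (r ^ (n - 1 - m) * (B ^ m).mulVec d i)
          ≤ r * ((B ^ n).mulVec w i - r ^ n * w i) := mul_le_mul_of_nonneg_left ihm hr
      have h3 : r ^ (n - 1 - m) * r * (B ^ m).mulVec d i
          = r * (r ^ (n - 1 - m) * (B ^ m).mulVec d i) := by ring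
      rw [h3, hp]
      nlinarith [h2, hnn]
    · have hsub : r ^ m * w i ≤ (B ^ m).mulVec w i := superinv_pow hB hw hr h m i
      have hexp : m + 1 - 1 - m = 0 := by omega
      have hp : r ^ (m + 1) = r * r ^ m := by ring
      rw [hstep, hexp, pow_zero, one_mul, hp]
      have h2 : r * (r ^ m * w i) ≤ r * (B ^ m).mulVec w i :=
        mul_le_mul_of_nonneg_left hsub hr
      nlinarith [h2]

lemma subinv_telescope (hB : ∀ i j, 0 ≤ B i j) {w : ι → ℝ} {r : ℝ} (hw : ∀ j, 0 ≤ w j)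
    (hr : 0 ≤ r) (h : ∀ i, B.mulVec w i ≤ r * w i) {m n : ℕ} (hmn : m < n) (i : ι) :
    r ^ (n - 1 - m) * ((B ^ m).mulVec (fun j => r * w j - B.mulVec w j)) i
      ≤ r ^ n * w i - (B ^ n).mulVec w i := by
  set d : ι → ℝ := fun j => r * w j - B.mulVec w j with hd
  have hδ : ∀ j, 0 ≤ d j := fun j => sub_nonneg.mpr (h j)
  have hBw : B.mulVec w = fun j => (-1) * d j + r * w j := by funext j; simp only [hd]; ring
  induction n generalizing i with
  | zero => omega
  | succ n ih =>
    have hstep : (B ^ (n + 1)).mulVec w i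
        = (-1) * (B ^ n).mulVec d i + r * (B ^ n).mulVec w i := by
      rw [pow_succ, ← Matrix.mulVec_mulVec, hBw]
      have h1 : (B ^ n).mulVec (fun j => (-1) * d j + r * w j) i
          = (B ^ n).mulVec (fun j => (-1) * d j) i + (B ^ n).mulVec (fun j => r * w j) i :=
        mulVec_add_entry _ _ _ i
      rw [h1, mulVec_smul_entry, mulVec_smul_entry]
    rcases Nat.lt_succ_iff_lt_or_eq.mp hmn with hm | rfl
    · have ihm := ih hm i
      have hnn : 0 ≤ (B ^ n).mulVec d i := mulVec_nonneg (pow_entry_nonneg hB n) hδ i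
      have hexp : n + 1 - 1 - m = (n - 1 - m) + 1 := by omega
      have hp : r ^ (n + 1) = r * r ^ n := by ring
      rw [hstep, hexp, pow_succ]
      have h2 : r * (r ^ (n - 1 - m) * (B ^ m).mulVec d i)
          ≤ r * (r ^ n * w i - (B ^ n).mulVec w i) := mul_le_mul_of_nonneg_left ihm hr
      have h3 : r ^ (n - 1 - m) * r * (B ^ m).mulVec d i
          = r * (r ^ (n - 1 - m) * (B ^ m).mulVec d i) := by ring
      rw [h3, hp]
      nlinarith [h2, hnn]
    · have hsub : (B ^ m).mulVec w i ≤ r ^ m * w i := subinv_pow hB hw hr h m i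
      have hexp : m + 1 - 1 - m = 0 := by omega
      have hp : r ^ (m + 1) = r * r ^ m := by ring
      rw [hstep, hexp, pow_zero, one_mul, hp]
      have h2 : r * (B ^ m).mulVec w i ≤ r * (r ^ m * w i) :=
        mul_le_mul_of_nonneg_left hsub hr
      nlinarith [h2]

end NonnegBasic

section PFCore

/-- general irreducibility -/
def IrrG (B : Matrix ι ι ℝ) : Prop := ∀ i j, ∃ n, 1 ≤ n ∧ 0 < (B ^ n) i j

variable {B : Matrix ι ι ℝ}

lemma sprad_le_of_subinv [Nonempty ι] (hB : ∀ i j, 0 ≤ B i j) {v : ι → ℝ} {μ : ℝ}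
    (hv : ∀ i, 0 < v i) (h : ∀ i, B.mulVec v i ≤ μ * v i) : sprad B ≤ μ := by
  obtain ⟨z, hz, hz2⟩ := exists_abs_eq_sprad B
  rw [← hz2]
  rw [mem_spectrum_iff] at hz
  obtain ⟨x, hx, hx2⟩ := hz
  obtain ⟨i0, _, hi0⟩ := Finset.exists_max_image Finset.univ
    (fun i => ‖x i‖ / v i) Finset.univ_nonempty
  set f : ι → ℝ := fun i => ‖x i‖ / v i with hf
  have hfx : ∀ j, ‖x j‖ = f j * v j := fun j =>
    (div_mul_cancel₀ _ (ne_of_gt (hv j))).symm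
  have hub : ∀ j, ‖x j‖ ≤ f i0 * v j := fun j => by
    rw [hfx j]
    exact mul_le_mul_of_nonneg_right (hi0 j (Finset.mem_univ j)) (hv j).le
  obtain ⟨j1, hj1⟩ := Function.ne_iff.mp hx
  have hfj1 : 0 < f j1 := div_pos (norm_pos_iff.mpr (by simpa using hj1)) (hv j1)
  have hfi0 : 0 < f i0 := lt_of_lt_of_le hfj1 (hi0 j1 (Finset.mem_univ j1))
  have hxi0 : 0 < ‖x i0‖ := by rw [hfx i0]; exact mul_pos hfi0 (hv i0)
  have hrow : (cmap B).mulVec x i0 = ∑ j, (B i0 j : ℂ) * x j := by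
    simp [cmap, Matrix.mulVec, dotProduct, Matrix.map_apply]
  have key : ‖z‖ * ‖x i0‖ ≤ μ * ‖x i0‖ := by
    calc ‖z‖ * ‖x i0‖ = ‖z * x i0‖ := (norm_mul _ _).symm
      _ = ‖(cmap B).mulVec x i0‖ := by rw [hx2]; simp
      _ = ‖∑ j, (B i0 j : ℂ) * x j‖ := by rw [hrow]
      _ ≤ ∑ j, ‖(B i0 j : ℂ) * x j‖ := norm_sum_le _ _
      _ = ∑ j, B i0 j * ‖x j‖ := by
          refine Finset.sum_congr rfl fun j _ => ?_
          rw [norm_mul, Complex.norm_real, Real.norm_eq_abs, abs_of_nonneg (hB i0 j)]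
      _ ≤ ∑ j, B i0 j * (f i0 * v j) := Finset.sum_le_sum fun j _ =>
            mul_le_mul_of_nonneg_left (hub j) (hB i0 j)
      _ = f i0 * B.mulVec v i0 := by
          simp only [Matrix.mulVec, dotProduct, Finset.mul_sum]
          exact Finset.sum_congr rfl fun j _ => by ring
      _ ≤ f i0 * (μ * v i0) := mul_le_mul_of_nonneg_left (h i0) hfi0.le
      _ = μ * (f i0 * v i0) := by ring
      _ = μ * ‖x i0‖ := by rw [← hfx i0]
  exact le_of_mul_le_mul_right key hxi0

lemma le_sprad_of_superinv [Nonempty ι] (hB : ∀ i j, 0 ≤ B i j) {v : ι → ℝ} {c : ℝ}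
    (hc : 0 ≤ c) (hv : ∀ i, 0 ≤ v i) (hv0 : ∃ i, 0 < v i)
    (h : ∀ i, c * v i ≤ B.mulVec v i) : c ≤ sprad B := by
  obtain ⟨i0, hi0⟩ := hv0
  have hvne : v ≠ 0 := fun hcon => by rw [hcon] at hi0; simp at hi0
  have hnv : 0 < ‖v‖ := norm_pos_iff.mpr hvne
  refine le_sprad_of_pow_norm hc (div_pos hi0 hnv) ?_ fun k => ?_
  · rw [div_le_one hnv]
    calc v i0 ≤ |v i0| := le_abs_self _
      _ = ‖v i0‖ := rfl
      _ ≤ ‖v‖ := norm_le_pi_norm v i0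
  · have h1 : c ^ k * v i0 ≤ (B ^ k).mulVec v i0 := superinv_pow hB hv hc h k i0
    have h2 : (B ^ k).mulVec v i0 ≤ ‖(B ^ k).mulVec v‖ := by
      calc (B ^ k).mulVec v i0 ≤ |(B ^ k).mulVec v i0| := le_abs_self _
        _ = ‖(B ^ k).mulVec v i0‖ := rfl
        _ ≤ ‖(B ^ k).mulVec v‖ := norm_le_pi_norm _ i0
    have h3 : ‖(B ^ k).mulVec v‖ ≤ ‖B ^ k‖ * ‖v‖ := Matrix.linfty_opNorm_mulVec _ _
    have h4 : c ^ k * v i0 ≤ ‖B ^ k‖ * ‖v‖ := le_trans h1 (le_trans h2 h3)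
    calc c ^ k * (v i0 / ‖v‖) = c ^ k * v i0 * ‖v‖⁻¹ := by ring
      _ ≤ ‖B ^ k‖ * ‖v‖ * ‖v‖⁻¹ := mul_le_mul_of_nonneg_right h4 (by positivity)
      _ = ‖B ^ k‖ := by field_simp

lemma sprad_eq_of_eig [Nonempty ι] (hB : ∀ i j, 0 ≤ B i j) {v : ι → ℝ} {μ : ℝ}
    (hv : ∀ i, 0 < v i) (h : B.mulVec v = μ • v) : sprad B = μ := by
  have hpt : ∀ i, B.mulVec v i = μ * v i := fun i => by
    have := congrFun h i; simpa using this
  have hμ0 : 0 ≤ μ := by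
    obtain i := Classical.arbitrary ι
    have h1 : 0 ≤ B.mulVec v i := mulVec_nonneg hB (fun j => (hv j).le) i
    rw [hpt i] at h1
    exact le_of_not_gt fun hneg => absurd h1 (not_le.mpr (mul_neg_of_neg_of_pos hneg (hv i)))
  apply le_antisymm
  · exact sprad_le_of_subinv hB hv fun i => (hpt i).le
  · have hx : (fun j => ((v j : ℝ) : ℂ)) ≠ 0 := by
      intro hcon
      obtain i := Classical.arbitrary ι
      have := congrFun hcon i
      simp at this
      exact absurd this (ne_of_gt (hv i))
    have heig : (cmap B).mulVec (fun j => ((v j : ℝ) : ℂ)) = (μ : ℂ) • (fun j => ((v j : ℝ) : ℂ)) := by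
      rw [cmap_mulVec]
      funext i
      rw [hpt i]
      push_cast
      simp
    have hmem : (μ : ℂ) ∈ spectrum ℂ (cmap B) := (mem_spectrum_iff _ _).mpr ⟨_, hx, heig⟩
    have := abs_le_sprad hmem
    rwa [Complex.norm_real, Real.norm_eq_abs, abs_of_nonneg hμ0] at this

lemma sprad_pos_of_irr [Nonempty ι] (hB : ∀ i j, 0 ≤ B i j) (hirr : IrrG B) : 0 < sprad B := by
  obtain i := Classical.arbitrary ι
  obtain ⟨n, hn, hc⟩ := hirr i i
  set c := (B ^ n) i i with hcdef
  have hBn : ∀ a b, 0 ≤ (B ^ n) a b := pow_entry_nonneg hB n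
  have hiter : ∀ k, c ^ k ≤ ((B ^ n) ^ k) i i := by
    intro k
    induction k with
    | zero => simp [Matrix.one_apply]
    | succ k ih =>
      calc c ^ (k + 1) = c ^ k * c := by ring
        _ ≤ ((B ^ n) ^ k) i i * (B ^ n) i i :=
            mul_le_mul ih le_rfl (le_of_lt hc) (le_trans (pow_nonneg hc.le k) ih)
        _ ≤ ((B ^ n) ^ (k + 1)) i i := by
            rw [pow_succ]
            exact entry_mul_le (pow_entry_nonneg hBn k) hBn i i i
  have hcs : c ≤ sprad (B ^ n) := by
    refine le_sprad_of_pow_norm hc.le one_pos le_rfl fun k => ?_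
    rw [mul_one]
    calc c ^ k ≤ ((B ^ n) ^ k) i i := hiter k
      _ ≤ |((B ^ n) ^ k) i i| := le_abs_self _
      _ ≤ ‖(B ^ n) ^ k‖ := entry_abs_le_norm _ i i
  rw [sprad_pow B hn] at hcs
  by_contra hcon
  push_neg at hcon
  have : sprad B = 0 := le_antisymm hcon (sprad_nonneg B)
  rw [this, zero_pow (by omega)] at hcs
  exact absurd (lt_of_lt_of_le hc hcs) (lt_irrefl 0)

lemma mulVec_sum_entry (B : Matrix ι ι ℝ) {s : Finset ℕ} (f : ℕ → ι → ℝ) (i : ι) :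
    B.mulVec (fun j => ∑ k ∈ s, f k j) i = ∑ k ∈ s, B.mulVec (f k) i := by
  simp only [Matrix.mulVec, dotProduct, Finset.mul_sum]
  rw [Finset.sum_comm]

lemma pow_mulVec_eig {B : Matrix ι ι ℝ} {u : ι → ℝ} {r : ℝ}
    (h : ∀ i, B.mulVec u i = r * u i) (k : ℕ) (i : ι) :
    (B ^ k).mulVec u i = r ^ k * u i := by
  induction k generalizing i with
  | zero => simp [Matrix.one_mulVec]
  | succ k ih =>
    rw [pow_mulVec_succ]
    have : (B ^ k).mulVec u = fun j => r ^ k * u j := funext fun j => ih j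
    rw [this, mulVec_smul_entry, h i]
    ring

theorem PF_irred [Nonempty ι] (hB : ∀ i j, 0 ≤ B i j) (hirr : IrrG B) :
    ∃ v : ι → ℝ, (∀ i, 0 < v i) ∧ B.mulVec v = sprad B • v := by
  set r := sprad B with hrdef
  have hr0 : 0 < r := sprad_pos_of_irr hB hirr
  obtain ⟨z, hz, hz2⟩ := exists_abs_eq_sprad B
  rw [mem_spectrum_iff] at hz
  obtain ⟨x, hx, hx2⟩ := hz
  set u : ι → ℝ := fun i => ‖x i‖ with hu
  have hu0 : ∀ i, 0 ≤ u i := fun i => norm_nonneg _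
  obtain ⟨j0, hj0⟩ := Function.ne_iff.mp hx
  have hj0' : 0 < u j0 := norm_pos_iff.mpr (by simpa using hj0)
  have hrow : ∀ i, (cmap B).mulVec x i = ∑ j, (B i j : ℂ) * x j := fun i => by
    simp [cmap, Matrix.mulVec, dotProduct, Matrix.map_apply]
  have hsup : ∀ i, r * u i ≤ B.mulVec u i := by
    intro i
    calc r * u i = ‖z‖ * ‖x i‖ := by rw [hz2]
      _ = ‖z * x i‖ := (norm_mul _ _).symm
      _ = ‖(cmap B).mulVec x i‖ := by rw [hx2]; simp
      _ = ‖∑ j, (B i j : ℂ) * x j‖ := by rw [hrow]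
      _ ≤ ∑ j, ‖(B i j : ℂ) * x j‖ := norm_sum_le _ _
      _ = ∑ j, B i j * u j := by
          refine Finset.sum_congr rfl fun j _ => ?_
          rw [norm_mul, Complex.norm_real, Real.norm_eq_abs, abs_of_nonneg (hB i j)]
      _ = B.mulVec u i := rfl
  -- claim equality
  have heq : ∀ i, B.mulVec u i = r * u i := by
    by_contra hcon
    push_neg at hcon
    obtain ⟨i1, hi1⟩ := hcon
    have hi1' : r * u i1 < B.mulVec u i1 := lt_of_le_of_ne (hsup i1) (Ne.symm hi1)
    -- build strictly positive w
    choose g hg1 hg2 using fun i => hirr i j0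
    set K := Finset.univ.sup g with hK
    set w : ι → ℝ := fun i => ∑ k ∈ Finset.range (K + 1), (B ^ k).mulVec u i with hw
    have hw0 : ∀ i, 0 ≤ w i := fun i =>
      Finset.sum_nonneg fun k _ => mulVec_nonneg (pow_entry_nonneg hB k) hu0 i
    have hwpos : ∀ i, 0 < w i := by
      intro i
      refine Finset.sum_pos' (fun k _ => mulVec_nonneg (pow_entry_nonneg hB k) hu0 i) ?_
      refine ⟨g i, Finset.mem_range.mpr (Nat.lt_succ_of_le (Finset.le_sup (Finset.mem_univ i))), ?_⟩
      calc (0:ℝ) < (B ^ (g i)) i j0 * u j0 := mul_pos (hg2 i) hj0'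
        _ ≤ (B ^ (g i)).mulVec u i := entry_mulVec_le (pow_entry_nonneg hB (g i)) hu0 i j0
    set δ : ι → ℝ := fun j => B.mulVec u j - r * u j with hδdef
    have hδ0 : ∀ j, 0 ≤ δ j := fun j => sub_nonneg.mpr (hsup j)
    have hδ1 : 0 < δ i1 := sub_pos.mpr hi1'
    -- B w i - r w i ≥ δ i
    have hkey : ∀ i, r * w i + δ i ≤ B.mulVec w i := by
      intro i
      have hBw : B.mulVec w i = ∑ k ∈ Finset.range (K + 1), (B ^ (k + 1)).mulVec u i := by
        rw [hw]
        rw [mulVec_sum_entry B (fun k => (B ^ k).mulVec u) i]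
        exact Finset.sum_congr rfl fun k _ => (congrFun (pow_mulVec_succ B u k) i).symm
      have hterm : ∀ k, (B ^ (k + 1)).mulVec u i
          = (B ^ k).mulVec δ i + r * (B ^ k).mulVec u i := by
        intro k
        have h1 : B.mulVec u = fun j => δ j + r * u j := by
          funext j; simp only [hδdef]; ring
        rw [pow_succ, ← Matrix.mulVec_mulVec, h1, mulVec_add_entry, mulVec_smul_entry]
      have hδterm : ∀ k ∈ Finset.range (K + 1), 0 ≤ (B ^ k).mulVec δ i :=
        fun k _ => mulVec_nonneg (pow_entry_nonneg hB k) hδ0 i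
      have h0mem : (0 : ℕ) ∈ Finset.range (K + 1) := Finset.mem_range.mpr (by omega)
      calc r * w i + δ i
          = δ i + ∑ k ∈ Finset.range (K + 1), r * (B ^ k).mulVec u i := by
            rw [hw, Finset.mul_sum]; ring
        _ ≤ (∑ k ∈ Finset.range (K + 1), (B ^ k).mulVec δ i)
            + ∑ k ∈ Finset.range (K + 1), r * (B ^ k).mulVec u i := by
            have : δ i = (B ^ 0).mulVec δ i := by simp [Matrix.one_mulVec]
            rw [this]
            exact add_le_add (Finset.single_le_sum hδterm h0mem) le_rfl
        _ = ∑ k ∈ Finset.range (K + 1), ((B ^ k).mulVec δ i + r * (B ^ k).mulVec u i) := by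
            rw [Finset.sum_add_distrib]
        _ = B.mulVec w i := by
            rw [hBw]
            exact Finset.sum_congr rfl fun k _ => (hterm k).symm
    have hw_super : ∀ i, r * w i ≤ B.mulVec w i := fun i =>
      le_trans (le_add_of_nonneg_right (hδ0 i)) (hkey i)
    -- strict everywhere in power n
    choose g2 hg21 hg22 using fun i => hirr i i1
    set n := Finset.univ.sup g2 + 1 with hn
    have hstrict : ∀ i, r ^ n * w i < (B ^ n).mulVec w i := by
      intro i
      have hmi : g2 i < n := Nat.lt_succ_of_le (Finset.le_sup (Finset.mem_univ i))
      have htel := superinv_telescope hB hw0 hr0.le hw_super hmi i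
      have hδ'1 : 0 < B.mulVec w i1 - r * w i1 := by
        have := hkey i1
        have := hδ1
        linarith
      have hpos : 0 < (B ^ (g2 i)).mulVec (fun j => B.mulVec w j - r * w j) i := by
        calc (0:ℝ) < (B ^ (g2 i)) i i1 * (B.mulVec w i1 - r * w i1) :=
              mul_pos (hg22 i) hδ'1
          _ ≤ (B ^ (g2 i)).mulVec (fun j => B.mulVec w j - r * w j) i :=
              entry_mulVec_le (pow_entry_nonneg hB (g2 i))
                (fun j => sub_nonneg.mpr (hw_super j)) i i1
      have hrp : 0 < r ^ (n - 1 - g2 i) := pow_pos hr0 _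
      nlinarith [htel, hpos, hrp]
    -- min ratio
    obtain ⟨i2, _, hi2⟩ := Finset.exists_min_image Finset.univ
      (fun i => (B ^ n).mulVec w i / w i) Finset.univ_nonempty
    set c := (B ^ n).mulVec w i2 / w i2 with hc
    have hcgt : r ^ n < c := by
      rw [hc, lt_div_iff₀ (hwpos i2)]
      calc r ^ n * w i2 < (B ^ n).mulVec w i2 := hstrict i2
        _ = (B ^ n).mulVec w i2 := rfl
    have hcw : ∀ i, c * w i ≤ (B ^ n).mulVec w i := by
      intro i
      have h1 : c ≤ (B ^ n).mulVec w i / w i := hi2 i (Finset.mem_univ i)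
      rw [le_div_iff₀ (hwpos i)] at h1
      linarith
    have hcle : c ≤ sprad (B ^ n) := by
      refine le_sprad_of_superinv (pow_entry_nonneg hB n) ?_ hw0 ⟨Classical.arbitrary ι, hwpos _⟩ hcw
      exact le_trans (pow_nonneg hr0.le n) hcgt.le
    rw [sprad_pow B (by omega : 1 ≤ n)] at hcle
    exact absurd (lt_of_lt_of_le hcgt hcle) (lt_irrefl _)
  -- positivity of u
  have hupos : ∀ i, 0 < u i := by
    intro i
    choose g hg1 hg2 using fun i => hirr i j0
    have h1 : (B ^ (g i)).mulVec u i = r ^ (g i) * u i := pow_mulVec_eig heq (g i) i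
    have h2 : (B ^ (g i)) i j0 * u j0 ≤ (B ^ (g i)).mulVec u i :=
      entry_mulVec_le (pow_entry_nonneg hB (g i)) hu0 i j0
    have h3 : 0 < r ^ (g i) * u i := lt_of_lt_of_le (mul_pos (hg2 i) hj0') (h1 ▸ h2)
    have h4 : 0 < r ^ (g i) := pow_pos hr0 _
    nlinarith [h3, h4, hu0 i]
  exact ⟨u, hupos, funext fun i => by rw [heq i]; simp⟩

lemma sprad_lt_of_strict_subinv [Nonempty ι] (hB : ∀ i j, 0 ≤ B i j) (hirr : IrrG B)
    {v : ι → ℝ} {μ : ℝ} {i0 : ι} (hv : ∀ i, 0 < v i) (h : ∀ i, B.mulVec v i ≤ μ * v i)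
    (hs : B.mulVec v i0 < μ * v i0) : sprad B < μ := by
  have hμ0 : 0 < μ := by
    have h1 : 0 ≤ B.mulVec v i0 := mulVec_nonneg hB (fun j => (hv j).le) i0
    nlinarith [hs, hv i0]
  choose g hg1 hg2 using fun i => hirr i i0
  set n := Finset.univ.sup g + 1 with hn
  have hstrict : ∀ i, (B ^ n).mulVec v i < μ ^ n * v i := by
    intro i
    have hmi : g i < n := Nat.lt_succ_of_le (Finset.le_sup (Finset.mem_univ i))
    have htel := subinv_telescope hB (fun j => (hv j).le) hμ0.le h hmi i
    have hδ0 : 0 < μ * v i0 - B.mulVec v i0 := sub_pos.mpr hs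
    have hpos : 0 < (B ^ (g i)).mulVec (fun j => μ * v j - B.mulVec v j) i := by
      calc (0:ℝ) < (B ^ (g i)) i i0 * (μ * v i0 - B.mulVec v i0) := mul_pos (hg2 i) hδ0
        _ ≤ (B ^ (g i)).mulVec (fun j => μ * v j - B.mulVec v j) i :=
            entry_mulVec_le (pow_entry_nonneg hB (g i))
              (fun j => sub_nonneg.mpr (h j)) i i0
    have hrp : 0 < μ ^ (n - 1 - g i) := pow_pos hμ0 _
    nlinarith [htel, hpos, hrp]
  obtain ⟨i2, _, hi2⟩ := Finset.exists_max_image Finset.univ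
    (fun i => (B ^ n).mulVec v i / v i) Finset.univ_nonempty
  set c := (B ^ n).mulVec v i2 / v i2 with hc
  have hclt : c < μ ^ n := by
    rw [hc, div_lt_iff₀ (hv i2)]
    exact lt_of_lt_of_le (hstrict i2) (by ring_nf; exact le_rfl)
  have hcv : ∀ i, (B ^ n).mulVec v i ≤ c * v i := by
    intro i
    have h1 : (B ^ n).mulVec v i / v i ≤ c := hi2 i (Finset.mem_univ i)
    rw [div_le_iff₀ (hv i)] at h1
    linarith
  have hcle : sprad (B ^ n) ≤ c := sprad_le_of_subinv (pow_entry_nonneg hB n) hv hcv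
  rw [sprad_pow B (by omega : 1 ≤ n)] at hcle
  by_contra hcon
  push_neg at hcon
  have : μ ^ n ≤ sprad B ^ n := pow_le_pow_left₀ hμ0.le hcon n
  linarith

lemma norm_pow_le_aux [Nonempty ι] (Y : Matrix ι ι ℝ) (k : ℕ) : ‖Y ^ k‖ ≤ ‖Y‖ ^ k := by
  induction k with
  | zero => simp
  | succ k ih =>
    rw [pow_succ, pow_succ]
    calc ‖Y ^ k * Y‖ ≤ ‖Y ^ k‖ * ‖Y‖ := norm_mul_le _ _
      _ ≤ ‖Y‖ ^ k * ‖Y‖ := mul_le_mul_of_nonneg_right ih (norm_nonneg _)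

lemma resolvent_pos [Nonempty ι] (hB : ∀ i j, 0 ≤ B i j) {lam : ℝ} (h : sprad B < lam) :
    ∃ T : Matrix ι ι ℝ, (lam • (1 : Matrix ι ι ℝ) - B) * T = 1 ∧ (∀ i j, 0 ≤ T i j) ∧
      ∀ (k : ℕ) (i j : ι), (B ^ k) i j ≤ lam ^ (k + 1) * T i j := by
  have hr0 : 0 ≤ sprad B := sprad_nonneg B
  have hlam0 : 0 < lam := lt_of_le_of_lt hr0 h
  -- invertibility
  have hdet : IsUnit (lam • (1 : Matrix ι ι ℝ) - B).det := by
    rw [isUnit_iff_ne_zero]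
    intro hdet0
    obtain ⟨v, hv, hv2⟩ := Matrix.exists_mulVec_eq_zero_iff.mpr hdet0
    have heig : B.mulVec v = lam • v := by
      have h1 : (lam • (1 : Matrix ι ι ℝ) - B).mulVec v = lam • v - B.mulVec v := by
        rw [Matrix.sub_mulVec, Matrix.smul_mulVec, Matrix.one_mulVec]
      rw [h1] at hv2
      exact (sub_eq_zero.mp hv2).symm
    have hx : (fun j => ((v j : ℝ) : ℂ)) ≠ 0 := by
      intro hcon
      obtain ⟨i, hi⟩ := Function.ne_iff.mp hv
      have := congrFun hcon i
      simp at this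
      exact hi (by simpa using this)
    have heig2 : (cmap B).mulVec (fun j => ((v j : ℝ) : ℂ))
        = (lam : ℂ) • (fun j => ((v j : ℝ) : ℂ)) := by
      rw [cmap_mulVec]
      funext i
      have := congrFun heig i
      simp only [Pi.smul_apply, smul_eq_mul] at this ⊢
      rw [this]
      push_cast
      ring
    have hmem : (lam : ℂ) ∈ spectrum ℂ (cmap B) := (mem_spectrum_iff _ _).mpr ⟨_, hx, heig2⟩
    have := abs_le_sprad hmem
    rw [Complex.norm_real, Real.norm_eq_abs, abs_of_pos hlam0] at this
    linarith
  set T := (lam • (1 : Matrix ι ι ℝ) - B)⁻¹ with hT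
  have hTl : (lam • (1 : Matrix ι ι ℝ) - B) * T = 1 := Matrix.mul_nonsing_inv _ hdet
  have hTr : T * (lam • (1 : Matrix ι ι ℝ) - B) = 1 := Matrix.nonsing_inv_mul _ hdet
  set S : ℕ → Matrix ι ι ℝ :=
    fun nn => ∑ k ∈ Finset.range nn, (lam⁻¹) ^ (k + 1) • B ^ k with hSdef
  have hS : ∀ nn : ℕ, (lam • (1 : Matrix ι ι ℝ) - B) * S nn
      = 1 - (lam⁻¹) ^ nn • B ^ nn := by
    intro nn
    induction nn with
    | zero => simp [hSdef]
    | succ nn ih =>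
      simp only [hSdef] at ih ⊢
      rw [Finset.sum_range_succ, mul_add, ih]
      have hmul : (lam • (1 : Matrix ι ι ℝ) - B) * ((lam⁻¹) ^ (nn + 1) • B ^ nn)
          = (lam⁻¹) ^ nn • B ^ nn - (lam⁻¹) ^ (nn + 1) • B ^ (nn + 1) := by
        rw [Matrix.mul_smul, sub_mul, Matrix.smul_mul, one_mul, ← pow_succ']
        rw [smul_sub, smul_smul]
        congr 2
        rw [pow_succ]
        field_simp
      rw [hmul]
      abel
  have hST : ∀ nn : ℕ, S nn = T - T * ((lam⁻¹) ^ nn • B ^ nn) := by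
    intro nn
    have h1 := congrArg (fun M => T * M) (hS nn)
    rw [← Matrix.mul_assoc, hTr, one_mul] at h1
    rw [h1, Matrix.mul_sub, Matrix.mul_one]
  set X : Matrix ι ι ℝ := lam⁻¹ • B with hXdef
  have hXpow : ∀ nn : ℕ, (lam⁻¹) ^ nn • B ^ nn = X ^ nn := fun nn => by
    rw [hXdef, smul_pow]
  -- remainder norm tends to zero
  have hXzero : Tendsto (fun nn : ℕ => ‖X ^ nn‖) atTop (𝓝 0) := by
    obtain ⟨m, hm1, hm2⟩ := exists_pow_norm_lt h
    have hm0 : 0 < m := by omega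
    have hq : ‖X ^ m‖ < 1 := by
      rw [hXdef, smul_pow, norm_smul, Real.norm_eq_abs, abs_pow,
        abs_of_pos (inv_pos.mpr hlam0), inv_pow, ← div_eq_inv_mul,
        div_lt_one (pow_pos hlam0 m)]
      exact hm2
    set q := ‖X ^ m‖ with hqdef
    have hq0 : 0 ≤ q := norm_nonneg _
    set Cc := (∑ rr ∈ Finset.range m, ‖X ^ rr‖) + 1 with hCcdef
    have hCc0 : 0 < Cc := by
      rw [hCcdef]
      have : 0 ≤ ∑ rr ∈ Finset.range m, ‖X ^ rr‖ :=
        Finset.sum_nonneg fun rr _ => norm_nonneg _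
      linarith
    have hCc : ∀ rr, rr < m → ‖X ^ rr‖ ≤ Cc := by
      intro rr hrr
      rw [hCcdef]
      have := Finset.single_le_sum (f := fun rr => ‖X ^ rr‖)
        (fun rr _ => norm_nonneg _) (Finset.mem_range.mpr hrr)
      linarith
    have hbound : ∀ nn : ℕ, ‖X ^ nn‖ ≤ Cc * q ^ (nn / m) := by
      intro nn
      have hsplit : X ^ nn = (X ^ m) ^ (nn / m) * X ^ (nn % m) := by
        rw [← pow_mul, ← pow_add, Nat.div_add_mod]
      rw [hsplit]
      calc ‖(X ^ m) ^ (nn / m) * X ^ (nn % m)‖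
          ≤ ‖(X ^ m) ^ (nn / m)‖ * ‖X ^ (nn % m)‖ := norm_mul_le _ _
        _ ≤ q ^ (nn / m) * Cc := by
            refine mul_le_mul ?_ (hCc _ (Nat.mod_lt _ hm0)) (norm_nonneg _)
              (pow_nonneg hq0 _)
            exact norm_pow_le_aux _ _
        _ = Cc * q ^ (nn / m) := mul_comm _ _
    have hdiv : Tendsto (fun nn : ℕ => nn / m) atTop atTop := by
      refine tendsto_atTop_atTop.mpr fun K => ⟨K * m, fun n hn => ?_⟩
      exact (Nat.le_div_iff_mul_le hm0).mpr hn
    have hq2 : Tendsto (fun nn : ℕ => q ^ (nn / m)) atTop (𝓝 0) :=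
      (tendsto_pow_atTop_nhds_zero_of_lt_one hq0 hq).comp hdiv
    have hq3 : Tendsto (fun nn : ℕ => Cc * q ^ (nn / m)) atTop (𝓝 0) := by
      have := hq2.const_mul Cc
      simpa using this
    exact squeeze_zero (fun nn => norm_nonneg _) hbound hq3
  -- entrywise convergence
  have hentry : ∀ i j, Tendsto (fun nn => S nn i j) atTop (𝓝 (T i j)) := by
    intro i j
    have hdiff : ∀ nn, T i j - S nn i j = (T * X ^ nn) i j := by
      intro nn
      rw [hST nn, hXpow nn, Matrix.sub_apply]
      ring
    have hzero : Tendsto (fun nn => T i j - S nn i j) atTop (𝓝 0) := by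
      have hb : ∀ nn, ‖T i j - S nn i j‖ ≤ ‖T‖ * ‖X ^ nn‖ := by
        intro nn
        rw [hdiff nn]
        calc ‖(T * X ^ nn) i j‖ = |(T * X ^ nn) i j| := rfl
          _ ≤ ‖T * X ^ nn‖ := entry_abs_le_norm _ i j
          _ ≤ ‖T‖ * ‖X ^ nn‖ := norm_mul_le _ _
      have hg : Tendsto (fun nn : ℕ => ‖T‖ * ‖X ^ nn‖) atTop (𝓝 0) := by
        have := hXzero.const_mul ‖T‖
        simpa using this
      exact squeeze_zero_norm hb hg
    have := (tendsto_const_nhds (x := T i j) (f := atTop)).sub hzero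
    simpa using this
  have hSentry : ∀ nn i j, S nn i j
      = ∑ k ∈ Finset.range nn, (lam⁻¹) ^ (k + 1) * (B ^ k) i j := by
    intro nn i j
    simp only [hSdef]
    simp [Matrix.sum_apply]
  have hSnonneg : ∀ nn i j, 0 ≤ S nn i j := by
    intro nn i j
    rw [hSentry]
    exact Finset.sum_nonneg fun k _ =>
      mul_nonneg (pow_nonneg (inv_pos.mpr hlam0).le _) (pow_entry_nonneg hB k i j)
  refine ⟨T, hTl, fun i j => ge_of_tendsto' (hentry i j) (fun nn => hSnonneg nn i j), ?_⟩
  intro k i j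
  have hterm : (lam⁻¹) ^ (k + 1) * (B ^ k) i j ≤ T i j := by
    refine ge_of_tendsto (hentry i j) ?_
    refine eventually_atTop.mpr ⟨k + 1, fun nn hnn => ?_⟩
    rw [hSentry]
    refine Finset.single_le_sum (f := fun k => (lam⁻¹) ^ (k + 1) * (B ^ k) i j) ?_
      (Finset.mem_range.mpr (by omega))
    exact fun l _ => mul_nonneg (pow_nonneg (inv_pos.mpr hlam0).le _)
      (pow_entry_nonneg hB l i j)
  have hmul := mul_le_mul_of_nonneg_left hterm (pow_pos hlam0 (k + 1)).le
  calc (B ^ k) i j = lam ^ (k + 1) * ((lam⁻¹) ^ (k + 1) * (B ^ k) i j) := by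
        rw [← mul_assoc, ← mul_pow, mul_inv_cancel₀ (ne_of_gt hlam0), one_pow, one_mul]
    _ ≤ lam ^ (k + 1) * T i j := hmul

end PFCore

lemma norm_le_norm_rows {ι' : Type*} [Fintype ι'] [DecidableEq ι']
    (M : Matrix ι ι ℝ) (M' : Matrix ι' ι' ℝ)
    (h : ∀ i : ι, ∃ i' : ι', (∑ j, |M i j|) ≤ ∑ j', |M' i' j'|) : ‖M‖ ≤ ‖M'‖ := by
  rw [← coe_nnnorm, ← coe_nnnorm, NNReal.coe_le_coe]
  rw [Matrix.linfty_opNNNorm_def, Matrix.linfty_opNNNorm_def]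
  refine Finset.sup_le fun i _ => ?_
  obtain ⟨i', hi'⟩ := h i
  refine le_trans ?_ (Finset.le_sup (f := fun i => ∑ j, ‖M' i j‖₊) (Finset.mem_univ i'))
  rw [← NNReal.coe_le_coe]
  push_cast
  simpa [Real.norm_eq_abs] using hi'

section Classes

variable {N : ℕ} {A : Matrix (Fin N) (Fin N) ℝ}

lemma access_refl (A : Matrix (Fin N) (Fin N) ℝ) (i : Fin N) : Access A i i := by
  exact ⟨0, by simp [Matrix.one_apply]⟩

lemma access_trans (hA : ∀ i j, 0 ≤ A i j) {i j k : Fin N} (h1 : Access A i j)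
    (h2 : Access A j k) : Access A i k := by
  obtain ⟨m, hm⟩ := h1
  obtain ⟨n, hn⟩ := h2
  exact ⟨m + n, lt_of_lt_of_le (mul_pos hm hn) (pow_mul_pow_le hA m n i j k)⟩

lemma access_step (hA : ∀ i j, 0 ≤ A i j) {n : ℕ} {i j : Fin N} (h : 0 < (A ^ (n + 1)) i j) :
    ∃ k, 0 < A i k ∧ 0 < (A ^ n) k j := by
  rw [pow_succ', Matrix.mul_apply] at h
  by_contra hcon
  push_neg at hcon
  have hz : ∀ k, A i k * (A ^ n) k j = 0 := by
    intro k
    rcases eq_or_lt_of_le (hA i k) with h1 | h1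
    · rw [← h1, zero_mul]
    · have h2 := hcon k h1
      have h3 : (A ^ n) k j = 0 := le_antisymm h2 (pow_entry_nonneg hA n k j)
      rw [h3, mul_zero]
  rw [Finset.sum_congr rfl (fun k _ => hz k)] at h
  simp at h

lemma access_of_entry (hA : ∀ i j, 0 ≤ A i j) {i j : Fin N} (h : 0 < A i j) : Access A i j := by
  exact ⟨1, by simpa [pow_one] using h⟩

section WithClass

variable {C : Finset (Fin N)} (hA : ∀ i j, 0 ≤ A i j) (hC : IsClass A C)

include hA hC

lemma class_mem_mutual {i j : Fin N} (hi : i ∈ C) (hj : j ∈ C) : Access A i j := by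
  obtain ⟨i0, hchar⟩ := hC
  have h1 := (hchar i).mp hi
  have h2 := (hchar j).mp hj
  exact access_trans hA h1.2 h2.1

lemma class_mem_of_access {i j : Fin N} (hi : i ∈ C) (hij : Access A i j) (hji : Access A j i) :
    j ∈ C := by
  obtain ⟨i0, hchar⟩ := hC
  have h1 := (hchar i).mp hi
  exact (hchar j).mpr ⟨access_trans hA h1.1 hij, access_trans hA hji h1.2⟩

lemma class_nonempty : C.Nonempty := by
  obtain ⟨i0, hchar⟩ := hC
  exact ⟨i0, (hchar i0).mpr ⟨access_refl A i0, access_refl A i0⟩⟩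

lemma class_pow_restrict {i j : Fin N} (hi : i ∈ C) (hj : j ∈ C) {n : ℕ}
    (h : 0 < (A ^ n) i j) : 0 < ((restrict A C) ^ n) ⟨i, hi⟩ ⟨j, hj⟩ := by
  induction n generalizing i j with
  | zero =>
    rw [pow_zero, Matrix.one_apply] at h
    split_ifs at h with hij
    · subst hij
      rw [pow_zero]
      simp [Matrix.one_apply]
    · exact absurd h (lt_irrefl 0)
  | succ n ih =>
    obtain ⟨k, hk1, hk2⟩ := access_step hA h
    have hkC : k ∈ C := by
      refine class_mem_of_access hA hC hi (access_of_entry hA hk1) ?_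
      exact access_trans hA ⟨n, hk2⟩ (class_mem_mutual hA hC hj hi)
    have ihk := ih hkC hj hk2
    rw [pow_succ']
    have hterm : restrict A C ⟨i, hi⟩ ⟨k, hkC⟩ * ((restrict A C) ^ n) ⟨k, hkC⟩ ⟨j, hj⟩
        ≤ (restrict A C * (restrict A C) ^ n) ⟨i, hi⟩ ⟨j, hj⟩ :=
      entry_mul_le (X := restrict A C) (Y := (restrict A C) ^ n)
        (fun a b => hA _ _) (pow_entry_nonneg (fun a b => hA _ _) n) _ _ _
    refine lt_of_lt_of_le ?_ hterm
    have : restrict A C ⟨i, hi⟩ ⟨k, hkC⟩ = A i k := rfl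
    rw [this]
    exact mul_pos hk1 ihk

lemma restrict_entry_nonneg (i j : {x // x ∈ C}) : 0 ≤ restrict A C i j := by
  exact hA _ _

lemma restrict_pow_le (n : ℕ) (i j : {x // x ∈ C}) :
    ((restrict A C) ^ n) i j ≤ (A ^ n) i.1 j.1 := by
  induction n generalizing i j with
  | zero =>
    rw [pow_zero, pow_zero, Matrix.one_apply]
    split_ifs with hij
    · subst hij; rw [Matrix.one_apply_eq]
    · rw [Matrix.one_apply]
      split_ifs with hij2
      · norm_num
      · exact le_refl 0
  | succ n ih =>
    rw [pow_succ', pow_succ', Matrix.mul_apply, Matrix.mul_apply]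
    calc ∑ k : {x // x ∈ C}, restrict A C i k * ((restrict A C) ^ n) k j
        ≤ ∑ k : {x // x ∈ C}, A i.1 k.1 * (A ^ n) k.1 j.1 := by
          refine Finset.sum_le_sum fun k _ => ?_
          exact mul_le_mul_of_nonneg_left (ih k j) (hA _ _)
      _ = ∑ l ∈ C, A i.1 l * (A ^ n) l j.1 :=
          Finset.sum_coe_sort C (fun l => A i.1 l * (A ^ n) l j.1)
      _ ≤ ∑ l, A i.1 l * (A ^ n) l j.1 := by
          refine Finset.sum_le_sum_of_subset_of_nonneg (Finset.subset_univ C) fun l _ _ => ?_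
          exact mul_nonneg (hA _ _) (pow_entry_nonneg hA n _ _)

lemma sprad_restrict_le [NeZero N] : sprad (restrict A C) ≤ sprad A := by
  haveI hne : Nonempty {x // x ∈ C} := Finset.nonempty_coe_sort.mpr (class_nonempty hA hC)
  haveI : Nonempty (Fin N) := ⟨⟨0, Nat.pos_of_ne_zero (NeZero.ne N)⟩⟩
  refine sprad_mono_norm fun k => ?_
  refine norm_le_norm_rows _ _ fun i => ⟨i.1, ?_⟩
  calc ∑ j : {x // x ∈ C}, |((restrict A C) ^ k) i j|
      = ∑ j : {x // x ∈ C}, ((restrict A C) ^ k) i j := by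
        refine Finset.sum_congr rfl fun j _ => ?_
        exact abs_of_nonneg (pow_entry_nonneg (fun a b => hA _ _) k i j)
    _ ≤ ∑ j : {x // x ∈ C}, (A ^ k) i.1 j.1 :=
        Finset.sum_le_sum fun j _ => restrict_pow_le hA hC k i j
    _ = ∑ l ∈ C, (A ^ k) i.1 l := Finset.sum_coe_sort C (fun l => (A ^ k) i.1 l)
    _ ≤ ∑ l, (A ^ k) i.1 l :=
        Finset.sum_le_sum_of_subset_of_nonneg (Finset.subset_univ C)
          (fun l _ _ => pow_entry_nonneg hA k _ _)
    _ = ∑ l, |(A ^ k) i.1 l| := by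
        refine Finset.sum_congr rfl fun l _ => ?_
        exact (abs_of_nonneg (pow_entry_nonneg hA k _ _)).symm

lemma class_irred_of_edge {a b : Fin N} (ha : a ∈ C) (hb : b ∈ C) (hab : 0 < A a b) :
    IrrG (restrict A C) := by
  intro i j
  obtain ⟨m1, hm1⟩ := class_mem_mutual hA hC i.2 ha
  obtain ⟨m2, hm2⟩ := class_mem_mutual hA hC hb j.2
  have h1 : 0 < (A ^ (1 + m2)) a j.1 := by
    refine lt_of_lt_of_le ?_ (pow_mul_pow_le hA 1 m2 a b j.1)
    rw [pow_one]
    exact mul_pos hab hm2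
  have h2 : 0 < (A ^ (m1 + (1 + m2))) i.1 j.1 := by
    refine lt_of_lt_of_le ?_ (pow_mul_pow_le hA m1 (1 + m2) i.1 a j.1)
    exact mul_pos hm1 h1
  refine ⟨m1 + (1 + m2), by omega, ?_⟩
  have := class_pow_restrict hA hC i.2 j.2 h2
  convert this using 2 <;> simp

lemma class_trivial_or_edge :
    (∃ i, C = {i} ∧ A i i = 0) ∨ ∃ a ∈ C, ∃ b ∈ C, 0 < A a b := by
  by_cases hedge : ∃ a ∈ C, ∃ b ∈ C, 0 < A a b
  · exact Or.inr hedge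
  push_neg at hedge
  left
  obtain ⟨i0, hi0⟩ := class_nonempty hA hC
  refine ⟨i0, ?_, ?_⟩
  · rw [Finset.eq_singleton_iff_unique_mem]
    refine ⟨hi0, fun j hj => ?_⟩
    by_contra hji
    obtain ⟨n, hn⟩ := class_mem_mutual hA hC hi0 hj
    cases n with
    | zero =>
      rw [pow_zero, Matrix.one_apply] at hn
      split_ifs at hn with hij
      · exact hji hij.symm
      · exact absurd hn (lt_irrefl 0)
    | succ n =>
      obtain ⟨k, hk1, hk2⟩ := access_step hA hn
      have hkC : k ∈ C := by
        refine class_mem_of_access hA hC hi0 (access_of_entry hA hk1) ?_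
        exact access_trans hA ⟨n, hk2⟩ (class_mem_mutual hA hC hj hi0)
      exact absurd hk1 (not_lt.mpr (hedge i0 hi0 k hkC))
  · exact le_antisymm (hedge i0 hi0 i0 hi0) (hA i0 i0)

lemma class_exit_edge {i j : Fin N} (hi : i ∈ C) (hj : j ∉ C) (hij : Access A i j) :
    ∃ a ∈ C, ∃ b, b ∉ C ∧ 0 < A a b := by
  obtain ⟨n, hn⟩ := hij
  induction n generalizing i with
  | zero =>
    rw [pow_zero, Matrix.one_apply] at hn
    split_ifs at hn with hij2
    · exact absurd (hij2 ▸ hi) hj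
    · exact absurd hn (lt_irrefl 0)
  | succ n ih =>
    obtain ⟨k, hk1, hk2⟩ := access_step hA hn
    by_cases hkC : k ∈ C
    · exact ih hkC hk2
    · exact ⟨i, hi, k, hkC, hk1⟩

lemma restrict_trivial_sprad {i : Fin N} (hCi : C = {i}) (hii : A i i = 0) :
    sprad (restrict A C) = 0 := by
  have hiC : i ∈ C := by rw [hCi]; exact Finset.mem_singleton_self i
  haveI : Nonempty {x // x ∈ C} := ⟨⟨i, hiC⟩⟩
  have hzero : restrict A C = 0 := by
    funext x y
    have hx : x.1 = i := Finset.mem_singleton.mp (by rw [← hCi]; exact x.2)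
    have hy : y.1 = i := Finset.mem_singleton.mp (by rw [← hCi]; exact y.2)
    show A x.1 y.1 = 0
    rw [hx, hy, hii]
  rw [hzero]
  exact sprad_zero

end WithClass

lemma exists_maximal_class (hA : ∀ i j, 0 ≤ A i j) (S : Finset (Fin N)) (hS : S.Nonempty) :
    ∃ i ∈ S, ∀ j ∈ S, Access A j i → Access A i j := by
  classical
  obtain ⟨i0, hi0S, hi0min⟩ := Finset.exists_min_image S
    (fun i => (S.filter (fun k => Access A k i)).card) hS
  refine ⟨i0, hi0S, fun j hj hji => ?_⟩
  by_contra hnij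
  have hsub : S.filter (fun k => Access A k j) ⊆ S.filter (fun k => Access A k i0) := by
    intro k hk
    rw [Finset.mem_filter] at hk ⊢
    exact ⟨hk.1, access_trans hA hk.2 hji⟩
  have hmem : i0 ∈ S.filter (fun k => Access A k i0) := by
    rw [Finset.mem_filter]
    exact ⟨hi0S, access_refl A i0⟩
  have hnmem : i0 ∉ S.filter (fun k => Access A k j) := by
    rw [Finset.mem_filter]
    rintro ⟨-, hcon⟩
    exact hnij hcon
  have hlt : (S.filter (fun k => Access A k j)).card
      < (S.filter (fun k => Access A k i0)).card :=
    Finset.card_lt_card ⟨hsub, fun hss => hnmem (hss hmem)⟩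
  exact absurd (hi0min j hj) (not_le.mpr hlt)

lemma restrict_mulVec_eq_sum (C : Finset (Fin N)) (v : {x // x ∈ C} → ℝ) (x : {x // x ∈ C}) :
    (restrict A C).mulVec v x = ∑ j ∈ C.attach, A x.1 j.1 * v j := by
  rw [Matrix.mulVec, dotProduct, Finset.univ_eq_attach]
  rfl

lemma sum_split (C : Finset (Fin N)) (f : Fin N → ℝ) :
    ∑ j, f j = (∑ j ∈ C, f j) + ∑ j ∈ Finset.univ \ C, f j := by
  rw [← Finset.sum_sdiff (Finset.subset_univ C)]
  ring

open Classical in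
lemma isClass_classOf (A : Matrix (Fin N) (Fin N) ℝ) (i : Fin N) :
    IsClass A (Finset.univ.filter fun j =>
      (Access A i j ∧ Access A j i)) := by
  refine ⟨i, fun j => ?_⟩
  simp [Finset.mem_filter]

end Classes

end PF

theorem stmt19 {N : ℕ} (A : Matrix (Fin N) (Fin N) ℝ) (hA : ∀ i j, 0 ≤ A i j) :
    (∃ (mu : ℝ) (w : Fin N → ℝ), (∀ i, 0 < w i) ∧ A.mulVec w = mu • w) ↔
    (∀ C : Finset (Fin N), IsClass A C → (IsFinalClass A C ↔ IsBasicClass A C)) := by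
  classical
  rcases Nat.eq_zero_or_pos N with hN | hN
  · subst hN
    constructor
    · intro _ C hC
      obtain ⟨i, -⟩ := hC
      exact i.elim0
    · intro _
      exact ⟨0, fun _ => 1, fun i => i.elim0, funext fun i => i.elim0⟩
  haveI : Nonempty (Fin N) := ⟨⟨0, hN⟩⟩
  haveI : NeZero N := ⟨hN.ne'⟩
  constructor
  · -- forward direction
    rintro ⟨mu, w, hw, heq⟩ C hC
    have hpt : ∀ i, A.mulVec w i = mu * w i := fun i => by
      have := congrFun heq i; simpa using this
    by_cases hA0 : A = 0
    · -- zero matrix : both sides hold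
      have hacc : ∀ i j : Fin N, Access A i j → i = j := by
        rintro i j ⟨n, hn⟩
        cases n with
        | zero =>
          rw [pow_zero, Matrix.one_apply] at hn
          split_ifs at hn with hij
          · exact hij
          · exact absurd hn (lt_irrefl 0)
        | succ n =>
          rw [hA0, zero_pow (by omega : n + 1 ≠ 0)] at hn
          simp at hn
      have hfin : IsFinalClass A C := by
        refine ⟨hC, fun i hi j hj hacc2 => ?_⟩
        exact hj ((hacc i j hacc2) ▸ hi)
      have hbasic : IsBasicClass A C := by
        refine ⟨hC, ?_⟩
        haveI : Nonempty {x // x ∈ C} :=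
          Finset.nonempty_coe_sort.mpr (PF.class_nonempty hA hC)
        have h1 : restrict A C = 0 := by
          funext x y
          show A x.1 y.1 = 0
          rw [hA0]
          rfl
        rw [h1, PF.sprad_zero, hA0, PF.sprad_zero]
      exact ⟨fun _ => hbasic, fun _ => hfin⟩
    · -- nonzero matrix
      have hmu0 : 0 < mu := by
        have hmunn : 0 ≤ mu := by
          obtain i := Classical.arbitrary (Fin N)
          have h1 : 0 ≤ A.mulVec w i := PF.mulVec_nonneg hA (fun j => (hw j).le) i
          rw [hpt i] at h1
          exact le_of_not_gt fun hneg =>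
            absurd h1 (not_le.mpr (mul_neg_of_neg_of_pos hneg (hw i)))
        rcases eq_or_lt_of_le hmunn with hmu | hmu
        · exfalso
          apply hA0
          funext i j
          have h1 : A.mulVec w i = 0 := by rw [hpt i, ← hmu, zero_mul]
          have h2 : ∀ l, 0 ≤ A i l * w l := fun l => mul_nonneg (hA i l) (hw l).le
          have h1' : ∑ l, A i l * w l = 0 := h1
          have h3 := (Finset.sum_eq_zero_iff_of_nonneg (fun l _ => h2 l)).mp h1'
          have h4 := h3 j (Finset.mem_univ j)
          have h5 : A i j = 0 := by
            rcases mul_eq_zero.mp h4 with h | h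
            · exact h
            · exact absurd h (ne_of_gt (hw j))
          rw [h5]; rfl
        · exact hmu
      have hmusprad : sprad A = mu := PF.sprad_eq_of_eig hA hw heq
      haveI hCne : Nonempty {x // x ∈ C} :=
        Finset.nonempty_coe_sort.mpr (PF.class_nonempty hA hC)
      constructor
      · rintro ⟨-, hfin⟩
        refine ⟨hC, ?_⟩
        -- restriction has positive eigenvector with eigenvalue mu
        have hzero : ∀ i ∈ C, ∀ j, j ∉ C → A i j = 0 := by
          intro i hi j hj
          by_contra hne
          have hpos : 0 < A i j := lt_of_le_of_ne (hA i j) (Ne.symm hne)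
          exact hfin i hi j hj (PF.access_of_entry hA hpos)
        have hroweq : (restrict A C).mulVec (fun x => w x.1) = mu • (fun x => w x.1) := by
          funext x
          rw [PF.restrict_mulVec_eq_sum]
          have h1 : ∑ j ∈ C.attach, A x.1 j.1 * w j.1 = ∑ j ∈ C, A x.1 j * w j :=
            Finset.sum_attach C (fun j => A x.1 j * w j)
          have h2 : ∑ j ∈ Finset.univ \ C, A x.1 j * w j = 0 := by
            refine Finset.sum_eq_zero fun j hj => ?_
            rw [Finset.mem_sdiff] at hj
            rw [hzero x.1 x.2 j hj.2, zero_mul]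
          have h3 : ∑ j, A x.1 j * w j = mu * w x.1 := hpt x.1
          rw [PF.sum_split C (fun j => A x.1 j * w j), h2, add_zero] at h3
          rw [h1, h3]
          simp
        have := PF.sprad_eq_of_eig (B := restrict A C) (fun a b => hA _ _) (fun x : {y // y ∈ C} => hw x.1) hroweq
        rw [this, hmusprad]
      · rintro ⟨-, hbasic⟩
        refine ⟨hC, ?_⟩
        intro i hi j hj hacc2
        obtain ⟨a, haC, b, hbC, hab⟩ := PF.class_exit_edge hA hC hi hj hacc2
        rcases PF.class_trivial_or_edge hA hC with ⟨i1, hC1, hii1⟩ | ⟨a2, ha2, b2, hb2, hab2⟩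
        · have h0 := PF.restrict_trivial_sprad hA hC hC1 hii1
          rw [h0, hmusprad] at hbasic
          exact absurd hbasic.symm (ne_of_gt hmu0)
        · have hirr := PF.class_irred_of_edge hA hC ha2 hb2 hab2
          have hsub : ∀ x : {x // x ∈ C},
              (restrict A C).mulVec (fun y => w y.1) x ≤ mu * w x.1 := by
            intro x
            have hx : ∑ j, A x.1 j * w j = mu * w x.1 := hpt x.1
            rw [PF.restrict_mulVec_eq_sum,
              Finset.sum_attach C (fun j => A x.1 j * w j), ← hx]
            refine Finset.sum_le_sum_of_subset_of_nonneg (Finset.subset_univ C)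
              fun l _ _ => mul_nonneg (hA _ _) (hw l).le
          have hstrict : (restrict A C).mulVec (fun y => w y.1) ⟨a, haC⟩ < mu * w a := by
            have hx : ∑ j, A a j * w j = mu * w a := hpt a
            rw [PF.restrict_mulVec_eq_sum,
              Finset.sum_attach C (fun j => A a j * w j), ← hx]
            exact Finset.sum_lt_sum_of_subset (Finset.subset_univ C)
              (Finset.mem_univ b) hbC (mul_pos hab (hw b))
              (fun l _ _ => mul_nonneg (hA _ _) (hw l).le)
          have hlt := PF.sprad_lt_of_strict_subinv (B := restrict A C) (fun a b => hA _ _) hirr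
            (fun x : {y // y ∈ C} => hw x.1) hsub hstrict
          rw [hbasic, hmusprad] at hlt
          exact absurd hlt (lt_irrefl mu)
  · -- backward direction
    intro hRHS
    by_cases hsprad0 : sprad A = 0
    · have hA0 : A = 0 := by
        by_contra hA0
        have hex : ∃ a b, 0 < A a b := by
          by_contra hcon
          push_neg at hcon
          apply hA0
          funext a b
          have := le_antisymm (hcon a b) (hA a b)
          rw [this]; rfl
        obtain ⟨a, b, hab⟩ := hex
        set C := Finset.univ.filter (fun j => Access A a j ∧ Access A j a) with hCdef
        have hC : IsClass A C := PF.isClass_classOf A a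
        have haC : a ∈ C := by
          rw [hCdef, Finset.mem_filter]
          exact ⟨Finset.mem_univ a, PF.access_refl A a, PF.access_refl A a⟩
        haveI : Nonempty {x // x ∈ C} :=
          Finset.nonempty_coe_sort.mpr (PF.class_nonempty hA hC)
        have hle : sprad (restrict A C) ≤ sprad A := PF.sprad_restrict_le hA hC
        by_cases hbC : b ∈ C
        · have hirr := PF.class_irred_of_edge hA hC haC hbC hab
          have hpos := PF.sprad_pos_of_irr (B := restrict A C) (fun x y => hA _ _) hirr
          rw [hsprad0] at hle
          linarith
        · have hnotfin : ¬ IsFinalClass A C := by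
            rintro ⟨-, hf⟩
            exact hf a haC b hbC (PF.access_of_entry hA hab)
          have hbasic : IsBasicClass A C := by
            refine ⟨hC, ?_⟩
            rw [hsprad0] at hle ⊢
            exact le_antisymm hle (PF.sprad_nonneg _)
          exact hnotfin ((hRHS C hC).mpr hbasic)
      refine ⟨0, fun _ => 1, fun _ => one_pos, ?_⟩
      rw [hA0]
      funext i
      simp [Matrix.zero_mulVec]
    · have hlam : 0 < sprad A :=
        lt_of_le_of_ne (PF.sprad_nonneg A) (Ne.symm hsprad0)
      have main : ∀ (n : ℕ) (S : Finset (Fin N)), S.card ≤ n →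
          (∀ i ∈ S, ∀ j, Access A i j → j ∈ S) →
          ∃ w : Fin N → ℝ, (∀ i ∈ S, 0 < w i) ∧ (∀ i, i ∉ S → w i = 0) ∧
            (∀ i ∈ S, A.mulVec w i = sprad A * w i) := by
        intro n
        induction n with
        | zero =>
          intro S hcard hclosed
          have hSe : S = ∅ := Finset.card_eq_zero.mp (le_antisymm hcard (Nat.zero_le _))
          subst hSe
          exact ⟨fun _ => 0, fun i hi => absurd hi (Finset.notMem_empty i),
            fun _ _ => rfl, fun i hi => absurd hi (Finset.notMem_empty i)⟩
        | succ n ih =>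
          intro S hcard hclosed
          rcases S.eq_empty_or_nonempty with rfl | hSne
          · exact ⟨fun _ => 0, fun i hi => absurd hi (Finset.notMem_empty i),
              fun _ _ => rfl, fun i hi => absurd hi (Finset.notMem_empty i)⟩
          obtain ⟨imax, himaxS, hmax⟩ := PF.exists_maximal_class hA S hSne
          set C := Finset.univ.filter (fun j => Access A imax j ∧ Access A j imax)
            with hCdef
          have hC : IsClass A C := PF.isClass_classOf A imax
          have hmemC : ∀ j, j ∈ C ↔ (Access A imax j ∧ Access A j imax) := by
            intro j
            rw [hCdef, Finset.mem_filter]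
            simp
          have himaxC : imax ∈ C :=
            (hmemC imax).mpr ⟨PF.access_refl A imax, PF.access_refl A imax⟩
          have hCsub : C ⊆ S := fun j hj =>
            hclosed imax himaxS j ((hmemC j).mp hj).1
          set S' := S \ C with hS'def
          have hclosed' : ∀ i ∈ S', ∀ j, Access A i j → j ∈ S' := by
            intro i hi j hij
            rw [hS'def, Finset.mem_sdiff] at hi ⊢
            refine ⟨hclosed i hi.1 j hij, fun hjC => ?_⟩
            have hiimax : Access A i imax := PF.access_trans hA hij ((hmemC j).mp hjC).2
            have himaxi : Access A imax i := hmax i hi.1 hiimax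
            exact hi.2 ((hmemC i).mpr ⟨himaxi, hiimax⟩)
          have himaxnS' : imax ∉ S' := by
            rw [hS'def, Finset.mem_sdiff]
            rintro ⟨-, h2⟩
            exact h2 himaxC
          have hcard' : S'.card ≤ n := by
            have h1 : S' ⊂ S := by
              rw [Finset.ssubset_iff_of_subset (Finset.sdiff_subset)]
              exact ⟨imax, himaxS, himaxnS'⟩
            have := Finset.card_lt_card h1
            omega
          obtain ⟨w', hw'pos, hw'zero, hw'eq⟩ := ih S' hcard' hclosed'
          have hw'nonneg : ∀ j, 0 ≤ w' j := by
            intro j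
            by_cases hj : j ∈ S'
            · exact (hw'pos j hj).le
            · rw [hw'zero j hj]
          have hw'C : ∀ c ∈ C, w' c = 0 := by
            intro c hc
            refine hw'zero c ?_
            rw [hS'def, Finset.mem_sdiff]
            rintro ⟨-, h2⟩
            exact h2 hc
          have hnoedge : ∀ i ∈ S', ∀ c ∈ C, A i c = 0 := by
            intro i hi c hc
            by_contra hne
            have hpos : 0 < A i c := lt_of_le_of_ne (hA i c) (Ne.symm hne)
            have hacc : Access A i c := PF.access_of_entry hA hpos
            have h1 : Access A i imax := PF.access_trans hA hacc ((hmemC c).mp hc).2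
            rw [hS'def, Finset.mem_sdiff] at hi
            have h2 := hmax i hi.1 h1
            exact hi.2 ((hmemC i).mpr ⟨h2, h1⟩)
          haveI hCne : Nonempty {x // x ∈ C} :=
            Finset.nonempty_coe_sort.mpr (PF.class_nonempty hA hC)
          -- we will produce v : C → ℝ positive with the appropriate row property,
          -- then assemble.
          have hassemble : ∀ v : {x // x ∈ C} → ℝ, (∀ x, 0 < v x) →
              (∀ x : {x // x ∈ C}, (restrict A C).mulVec v x + A.mulVec w' x.1
                = sprad A * v x) →
              ∃ w : Fin N → ℝ, (∀ i ∈ S, 0 < w i) ∧ (∀ i, i ∉ S → w i = 0) ∧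
                (∀ i ∈ S, A.mulVec w i = sprad A * w i) := by
            intro v hvpos hvrow
            set w : Fin N → ℝ := fun i => if h : i ∈ C then v ⟨i, h⟩ else w' i with hwdef
            have hwC : ∀ (i) (h : i ∈ C), w i = v ⟨i, h⟩ := by
              intro i h
              rw [hwdef]
              simp [h]
            have hwnC : ∀ i, i ∉ C → w i = w' i := by
              intro i h
              rw [hwdef]
              simp [h]
            refine ⟨w, ?_, ?_, ?_⟩
            · intro i hi
              by_cases hiC : i ∈ C
              · rw [hwC i hiC]; exact hvpos _
              · rw [hwnC i hiC]
                refine hw'pos i ?_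
                rw [hS'def, Finset.mem_sdiff]
                exact ⟨hi, hiC⟩
            · intro i hi
              have hiC : i ∉ C := fun h => hi (hCsub h)
              rw [hwnC i hiC]
              refine hw'zero i ?_
              rw [hS'def, Finset.mem_sdiff]
              rintro ⟨h1, -⟩
              exact hi h1
            · intro i hi
              have hrowsplit : A.mulVec w i
                  = (∑ j ∈ C, A i j * w j) + ∑ j ∈ Finset.univ \ C, A i j * w j :=
                PF.sum_split C (fun j => A i j * w j)
              have hCsum : ∀ (h : i ∈ C) , ∑ j ∈ C, A i j * w j
                  = (restrict A C).mulVec v ⟨i, h⟩ := by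
                intro h
                rw [PF.restrict_mulVec_eq_sum]
                rw [← Finset.sum_attach C (fun j => A i j * w j)]
                refine Finset.sum_congr rfl fun x _ => ?_
                rw [hwC x.1 x.2]
              have houtsum : ∑ j ∈ Finset.univ \ C, A i j * w j
                  = ∑ j ∈ Finset.univ \ C, A i j * w' j := by
                refine Finset.sum_congr rfl fun j hj => ?_
                rw [Finset.mem_sdiff] at hj
                rw [hwnC j hj.2]
              by_cases hiC : i ∈ C
              · have hout2 : ∑ j ∈ Finset.univ \ C, A i j * w' j
                    = A.mulVec w' i := by
                  have h3 : ∑ j ∈ C, A i j * w' j = 0 :=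
                    Finset.sum_eq_zero fun j hj => by rw [hw'C j hj, mul_zero]
                  have h4 := PF.sum_split C (fun j => A i j * w' j)
                  rw [h3, zero_add] at h4
                  exact h4.symm
                rw [hrowsplit, hCsum hiC, houtsum, hout2, hvrow ⟨i, hiC⟩, hwC i hiC]
              · have hiS' : i ∈ S' := by
                  rw [hS'def, Finset.mem_sdiff]
                  exact ⟨hi, hiC⟩
                have hCzero : ∑ j ∈ C, A i j * w j = 0 :=
                  Finset.sum_eq_zero fun j hj => by
                    rw [hnoedge i hiS' j hj, zero_mul]
                have hw'row : ∑ j, A i j * w' j = sprad A * w' i := hw'eq i hiS'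
                have hCzero' : ∑ j ∈ C, A i j * w' j = 0 :=
                  Finset.sum_eq_zero fun j hj => by
                    rw [hnoedge i hiS' j hj, zero_mul]
                have h4 := PF.sum_split C (fun j => A i j * w' j)
                rw [hCzero', zero_add] at h4
                rw [hrowsplit, hCzero, zero_add, houtsum, ← h4, hw'row, hwnC i hiC]
          by_cases hfin : IsFinalClass A C
          · -- final class: basic, use Perron-Frobenius
            have hbasic := (hRHS C hC).mp hfin
            have hsr : sprad (restrict A C) = sprad A := hbasic.2
            rcases PF.class_trivial_or_edge hA hC with ⟨i1, hC1, hii1⟩ | ⟨a2, ha2, b2, hb2, hab2⟩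
            · exfalso
              have h0 := PF.restrict_trivial_sprad hA hC hC1 hii1
              rw [h0] at hsr
              rw [← hsr] at hlam
              exact absurd hlam (lt_irrefl 0)
            have hirr := PF.class_irred_of_edge hA hC ha2 hb2 hab2
            obtain ⟨v, hvpos, hveq⟩ := PF.PF_irred (B := restrict A C) (fun x y => hA _ _) hirr
            rw [hsr] at hveq
            refine hassemble v hvpos fun x => ?_
            have hzero : ∀ j, j ∉ C → A x.1 j = 0 := by
              intro j hj
              by_contra hne
              have hpos : 0 < A x.1 j := lt_of_le_of_ne (hA _ _) (Ne.symm hne)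
              exact hfin.2 x.1 x.2 j hj (PF.access_of_entry hA hpos)
            have hb0 : A.mulVec w' x.1 = 0 := by
              have h1 : ∀ j, A x.1 j * w' j = 0 := by
                intro j
                by_cases hjC : j ∈ C
                · rw [hw'C j hjC, mul_zero]
                · rw [hzero j hjC, zero_mul]
              have h2 : ∑ j, A x.1 j * w' j = 0 := Finset.sum_eq_zero fun j _ => h1 j
              exact h2
            rw [hb0, add_zero]
            have := congrFun hveq x
            simpa using this
          · -- non-final class: strictly smaller spectral radius, use resolvent
            have hnbasic : ¬ IsBasicClass A C := fun hb => hfin ((hRHS C hC).mpr hb)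
            have hlt : sprad (restrict A C) < sprad A :=
              lt_of_le_of_ne (PF.sprad_restrict_le hA hC) fun he => hnbasic ⟨hC, he⟩
            obtain ⟨T, hT1, hT2, hT3⟩ := PF.resolvent_pos (B := restrict A C) (fun x y => hA _ _) hlt
            set bb : {x // x ∈ C} → ℝ := fun x => A.mulVec w' x.1 with hbbdef
            have hbb0 : ∀ x, 0 ≤ bb x := fun x => PF.mulVec_nonneg hA hw'nonneg x.1
            -- find strictly positive component of bb
            have hnotfin2 : ∃ i ∈ C, ∃ j, j ∉ C ∧ Access A i j := by
              by_contra hcon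
              push_neg at hcon
              exact hfin ⟨hC, fun i hi j hj hij => (hcon i hi j hj) hij⟩
            obtain ⟨i2, hi2C, j2, hj2C, hacc2⟩ := hnotfin2
            obtain ⟨a, haC, b, hbC, hab⟩ := PF.class_exit_edge hA hC hi2C hj2C hacc2
            have hbS : b ∈ S := hclosed a (hCsub haC) b (PF.access_of_entry hA hab)
            have hbS' : b ∈ S' := by
              rw [hS'def, Finset.mem_sdiff]
              exact ⟨hbS, hbC⟩
            have hbbpos : 0 < bb ⟨a, haC⟩ := by
              rw [hbbdef]
              calc (0:ℝ) < A a b * w' b := mul_pos hab (hw'pos b hbS')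
                _ ≤ A.mulVec w' a := PF.entry_mulVec_le hA hw'nonneg a b
            have hvrow : ∀ x, (restrict A C).mulVec (T.mulVec bb) x + bb x
                = sprad A * (T.mulVec bb) x := by
              intro x
              have h1 : ((sprad A • (1 : Matrix {x // x ∈ C} {x // x ∈ C} ℝ)
                  - restrict A C) * T).mulVec bb = bb := by
                rw [hT1, Matrix.one_mulVec]
              have h2 := congrFun h1 x
              rw [← Matrix.mulVec_mulVec, Matrix.sub_mulVec, Matrix.smul_mulVec,
                Matrix.one_mulVec] at h2
              simp only [Pi.sub_apply, Pi.smul_apply, smul_eq_mul] at h2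
              linarith [h2]
            have hvpos : ∀ x, 0 < T.mulVec bb x := by
              intro x
              obtain ⟨k, hk⟩ := PF.class_mem_mutual hA hC x.2 haC
              have hk2 : 0 < ((restrict A C) ^ k) x ⟨a, haC⟩ :=
                PF.class_pow_restrict hA hC x.2 haC hk
              have hT3' := hT3 k x ⟨a, haC⟩
              have hTpos : 0 < T x ⟨a, haC⟩ := by
                by_contra hcon
                push_neg at hcon
                have h0 : T x ⟨a, haC⟩ = 0 := le_antisymm hcon (hT2 _ _)
                rw [h0, mul_zero] at hT3'
                exact absurd (lt_of_lt_of_le hk2 hT3') (lt_irrefl 0)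
              calc (0:ℝ) < T x ⟨a, haC⟩ * bb ⟨a, haC⟩ := mul_pos hTpos hbbpos
                _ ≤ T.mulVec bb x := PF.entry_mulVec_le hT2 hbb0 x ⟨a, haC⟩
            exact hassemble (T.mulVec bb) hvpos hvrow
      obtain ⟨w, hwpos, -, hweq⟩ := main N Finset.univ (by simp)
        (fun i _ j _ => Finset.mem_univ j)
      refine ⟨sprad A, w, fun i => hwpos i (Finset.mem_univ i), funext fun i => ?_⟩
      rw [hweq i (Finset.mem_univ i)]
      simp
end
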